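/- arXiv:2302.07321 — 7 statements merged into one kernel-verified Lean document; each statement's English description precedes it below -/
import Mathlib

section
/- Let L : R^k → R^k_{≥0} be a permutation equivariant multiclass loss satisfying: for all v and all y,j, v_y ≥ v_j implies L_y(v) ≤ L_j(v). Let p ∈ Δ^k with p_1 ≥ p_2 ≥ ... ≥ p_k, let v ∈ R^k be arbitrary, and let σ be a permutation such that v_{σ(1)} ≥ v_{σ(2)} ≥ ... ≥ v_{σ(k)}. Then C_p(v) ≥ C_p(σ(v)). -/
/-! By permutation equivariance the risk of the sorted scores is `∑ j, p j * L v (σ j)`. The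
ordering condition makes `j ↦ L v (σ j)` non-decreasing, so it is paired with the non-increasing
`p` in opposite order, which by the rearrangement inequality gives the smallest of all pairings,
in particular no larger than `∑ j, p j * L v j`. -/

open Finset

theorem monotone_comp_of_antitone_comp {ι α β : Type*} [Preorder ι] [Preorder β]
    {v : α → β} {l : α → ℝ} (hvl : ∀ y j, v j ≤ v y → l y ≤ l j) {σ : ι → α}
    (hσ : Antitone (v ∘ σ)) : Monotone (l ∘ σ) :=
  fun _ _ hij => hvl _ _ (hσ hij)

theorem sum_mul_comp_perm_le_sum_mul {ι : Type*} [LinearOrder ι] [Fintype ι] {p b : ι → ℝ}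
    (hp : Antitone p) {σ : Equiv.Perm ι} (hb : Monotone (b ∘ σ)) :
    ∑ j, p j * b (σ j) ≤ ∑ j, p j * b j :=
  calc ∑ j, p j * b (σ j) ≤ ∑ j, p (σ j) * b (σ j) :=
        (hp.antivary hb).sum_mul_le_sum_comp_perm_mul
    _ = ∑ j, p j * b j := Equiv.sum_comp σ fun j => p j * b j

theorem sorting_decreases_conditional_risk_general {k : ℕ}
    (L : (Fin k → ℝ) → (Fin k → ℝ))
    (hequiv : ∀ (σ : Equiv.Perm (Fin k)) (v : Fin k → ℝ),
      L (fun j => v (σ j)) = fun j => L v (σ j))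
    (hord : ∀ (v : Fin k → ℝ) (y j : Fin k), v j ≤ v y → L v y ≤ L v j)
    (p : Fin k → ℝ)
    (hpdesc : Antitone p)
    (v : Fin k → ℝ) (σ : Equiv.Perm (Fin k))
    (hσ : Antitone (fun j => v (σ j))) :
    ∑ j, p j * L (fun i => v (σ i)) j ≤ ∑ j, p j * L v j := by
  rw [hequiv σ v]
  exact sum_mul_comp_perm_le_sum_mul hpdesc (monotone_comp_of_antitone_comp (hord v) hσ)

/-- Sorting the score vector in non-increasing order can only decrease the conditional risk
when the probability vector is non-increasing. -/
theorem sorting_decreases_conditional_risk {k : ℕ} (hk : 2 ≤ k)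
    (L : (Fin k → ℝ) → (Fin k → ℝ))
    (hL0 : ∀ v y, 0 ≤ L v y)
    (hequiv : ∀ (σ : Equiv.Perm (Fin k)) (v : Fin k → ℝ),
      L (fun j => v (σ j)) = fun j => L v (σ j))
    (hord : ∀ (v : Fin k → ℝ) (y j : Fin k), v j ≤ v y → L v y ≤ L v j)
    (p : Fin k → ℝ) (hp0 : ∀ j, 0 ≤ p j) (hp1 : ∑ j, p j = 1)
    (hpdesc : Antitone p)
    (v : Fin k → ℝ) (σ : Equiv.Perm (Fin k))
    (hσ : Antitone (fun j => v (σ j))) :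
    ∑ j, p j * L (fun i => v (σ i)) j ≤ ∑ j, p j * L v j :=
  sorting_decreases_conditional_risk_general L hequiv hord p hpdesc v σ hσ
end

section
/- Let γ : R_{≥0} → R_{≥0} be continuously differentiable with γ'(x) > 0 for all x ≥ 0 and sup γ = +∞, and φ : R → R_{≥0} differentiable, non-increasing with φ'(0) < 0 and inf φ = 0. Let L be the associated Gamma-Phi loss. Let p ∈ Δ^k and y, y' ∈ [k] with p_{y'} > p_y. If {v^t} ⊆ R^k satisfies liminf_t (v^t_y − v^t_{y'}) > 0 and lim_t C_p(v^t) exists and is finite, then lim_t C_p(v^t) > C_p^*, the conditional Bayes risk. -/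
/-!
Swapping the scores of `y` and `y'` in `v` lowers the risk by `(p y' - p y) * (L_{y'} v - L_y v)`.
Eventually `v_y - v_{y'} > δ > 0`, so the argument of `γ` in `L_{y'}` exceeds the one in `L_y` by
at least `φ (-δ) - φ δ`, which is positive because `φ' 0 < 0`. Since the risks stay bounded and `γ`
is unbounded, the argument of `γ` in `L_{y'}` stays in a compact interval, on which the increments
of the continuous, strictly increasing `γ` over steps of that length are at least some `ε > 0`.
So the swapped vectors have risk at most `C_p(v^t) - (p y' - p y) ε`, eventually below the limit.
-/

open Filter Topology

/-- The `y`-th component of the Gamma-Phi loss associated to `γ` and `φ`. -/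
noncomputable def gammaPhiLoss {k : ℕ} (γ φ : ℝ → ℝ) (v : Fin k → ℝ) (y : Fin k) : ℝ :=
  γ (∑ j ∈ Finset.univ.erase y, φ (v y - v j))

/-- The conditional risk of the Gamma-Phi loss at `p`. -/
noncomputable def condRisk {k : ℕ} (γ φ : ℝ → ℝ) (p v : Fin k → ℝ) : ℝ :=
  ∑ y, p y * gammaPhiLoss γ φ v y

open Finset Set

lemma exists_pos_eventually_lt_of_pos_liminf {α : Type*} {l : Filter α} {f : α → ℝ}
    (h : 0 < liminf (fun t => (f t : EReal)) l) : ∃ δ > 0, ∀ᶠ t in l, δ < f t := by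
  obtain ⟨δ, hδ0, hδ⟩ := EReal.lt_iff_exists_real_btwn.mp h
  refine ⟨δ, EReal.coe_pos.mp hδ0, ?_⟩
  filter_upwards [eventually_lt_of_lt_liminf hδ] with t ht
  exact EReal.coe_lt_coe_iff.mp ht

/-- Otherwise `f` would be constant on `(a, b)`. -/
lemma Antitone.lt_of_deriv_neg {f : ℝ → ℝ} (hf : Antitone f) {a b x : ℝ} (hax : a < x)
    (hxb : x < b) (hx : deriv f x < 0) : f b < f a := by
  by_contra! hab
  have hconst : f =ᶠ[𝓝 x] fun _ => f b := by
    filter_upwards [Ioo_mem_nhds hax hxb] with z hz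
    exact le_antisymm ((hf hz.1.le).trans hab) (hf hz.2.le)
  rw [hconst.deriv_eq, deriv_const] at hx
  exact hx.false

lemma MonotoneOn.exists_le_of_not_bddAbove {α β : Type*} [LinearOrder α] [LinearOrder β]
    {f : α → β} {s : Set α} (hf : MonotoneOn f s) (hunb : ¬ BddAbove (f '' s)) (M : β) :
    ∃ B, ∀ x ∈ s, f x ≤ M → x ≤ B := by
  obtain ⟨_, ⟨B, hBs, rfl⟩, hMB⟩ := not_bddAbove_iff.mp hunb M
  refine ⟨B, fun x hxs hxM => ?_⟩
  by_contra! hBx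
  exact (hMB.trans_le (hf hBs hxs hBx.le)).not_ge hxM

lemma StrictMonoOn.exists_pos_le_sub_add {f : ℝ → ℝ} {a : ℝ} (hf : StrictMonoOn f (Ici a))
    (hcont : Continuous f) {η : ℝ} (hη : 0 < η) (b : ℝ) :
    ∃ ε > 0, ∀ s ∈ Icc a b, ε ≤ f (s + η) - f s := by
  rcases (Icc a b).eq_empty_or_nonempty with hempty | hne
  · exact ⟨1, one_pos, by simp [hempty]⟩
  have hinc : ContinuousOn (fun s => f (s + η) - f s) (Icc a b) := by fun_prop
  obtain ⟨ξ, hξ, hmin⟩ := isCompact_Icc.exists_isMinOn hne hinc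
  refine ⟨f (ξ + η) - f ξ, ?_, fun s hs => hmin hs⟩
  exact sub_pos.mpr (hf hξ.1 (hξ.1.trans (by linarith)) (by linarith))

section GammaPhi

variable {k : ℕ} {γ φ : ℝ → ℝ}

def phiSum (φ : ℝ → ℝ) (v : Fin k → ℝ) (y : Fin k) : ℝ :=
  ∑ j ∈ univ.erase y, φ (v y - v j)

lemma gammaPhiLoss_eq_phiSum (v : Fin k → ℝ) (y : Fin k) :
    gammaPhiLoss γ φ v y = γ (phiSum φ v y) := rfl

lemma phiSum_nonneg (hφ0 : ∀ x, 0 ≤ φ x) (v : Fin k → ℝ) (y : Fin k) : 0 ≤ phiSum φ v y :=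
  sum_nonneg fun _ _ => hφ0 _

/-- Termwise comparison: the summands comparing `y` with `y'` gain `φ (-δ) - φ δ`, the others
do not decrease since `v y' ≤ v y`. -/
lemma phiSum_add_le (hφ : Antitone φ) {v : Fin k → ℝ} {y y' : Fin k} (hyy' : y ≠ y') {δ : ℝ}
    (hδ0 : 0 ≤ δ) (hδ : δ ≤ v y - v y') : phiSum φ v y + (φ (-δ) - φ δ) ≤ phiSum φ v y' := by
  have hy' : y' ∈ univ.erase y := mem_erase.mpr ⟨hyy'.symm, mem_univ _⟩
  have hy : y ∈ univ.erase y' := mem_erase.mpr ⟨hyy', mem_univ _⟩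
  rw [phiSum, phiSum, ← add_sum_erase _ _ hy', ← add_sum_erase _ _ hy, erase_right_comm]
  have hhead : φ (v y - v y') + φ (-δ) ≤ φ δ + φ (v y' - v y) :=
    add_le_add (hφ hδ) (hφ (by linarith))
  have htail : ∑ j ∈ (univ.erase y').erase y, φ (v y - v j)
      ≤ ∑ j ∈ (univ.erase y').erase y, φ (v y' - v j) :=
    sum_le_sum fun j _ => hφ (by linarith)
  linarith

lemma le_gammaPhiLoss_sub (hγ : MonotoneOn γ (Ici 0)) (hφ0 : ∀ x, 0 ≤ φ x) (hφ : Antitone φ)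
    {v : Fin k → ℝ} {y y' : Fin k} (hyy' : y ≠ y') {δ B ε : ℝ} (hδ0 : 0 ≤ δ)
    (hδ : δ ≤ v y - v y') (hB : phiSum φ v y' ≤ B)
    (hgap : ∀ s ∈ Icc 0 B, ε ≤ γ (s + (φ (-δ) - φ δ)) - γ s) :
    ε ≤ gammaPhiLoss γ φ v y' - gammaPhiLoss γ φ v y := by
  have hη : 0 ≤ φ (-δ) - φ δ := sub_nonneg.mpr (hφ (by linarith))
  have hshift := phiSum_add_le hφ hyy' hδ0 hδ
  have hS := phiSum_nonneg hφ0 v y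
  rw [gammaPhiLoss_eq_phiSum, gammaPhiLoss_eq_phiSum]
  calc ε ≤ γ (phiSum φ v y + (φ (-δ) - φ δ)) - γ (phiSum φ v y) := hgap _ ⟨hS, by linarith⟩
    _ ≤ γ (phiSum φ v y') - γ (phiSum φ v y) :=
      sub_le_sub_right (hγ (add_nonneg hS hη) (phiSum_nonneg hφ0 v y') hshift) _

lemma gammaPhiLoss_nonneg (hγ0 : ∀ x ≥ 0, 0 ≤ γ x) (hφ0 : ∀ x, 0 ≤ φ x) (v : Fin k → ℝ)
    (y : Fin k) : 0 ≤ gammaPhiLoss γ φ v y :=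
  hγ0 _ (phiSum_nonneg hφ0 v y)

lemma condRisk_nonneg (hγ0 : ∀ x ≥ 0, 0 ≤ γ x) (hφ0 : ∀ x, 0 ≤ φ x) {p : Fin k → ℝ}
    (hp0 : ∀ j, 0 ≤ p j) (v : Fin k → ℝ) : 0 ≤ condRisk γ φ p v :=
  sum_nonneg fun j _ => mul_nonneg (hp0 j) (gammaPhiLoss_nonneg hγ0 hφ0 v j)

lemma mul_gammaPhiLoss_le_condRisk (hγ0 : ∀ x ≥ 0, 0 ≤ γ x) (hφ0 : ∀ x, 0 ≤ φ x)
    {p : Fin k → ℝ} (hp0 : ∀ j, 0 ≤ p j) (v : Fin k → ℝ) (y : Fin k) :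
    p y * gammaPhiLoss γ φ v y ≤ condRisk γ φ p v :=
  single_le_sum (fun j _ => mul_nonneg (hp0 j) (gammaPhiLoss_nonneg hγ0 hφ0 v j)) (mem_univ y)

lemma gammaPhiLoss_comp_perm (v : Fin k → ℝ) (σ : Equiv.Perm (Fin k)) (y : Fin k) :
    gammaPhiLoss γ φ (v ∘ σ) y = gammaPhiLoss γ φ v (σ y) := by
  rw [gammaPhiLoss, gammaPhiLoss]
  congr 1
  exact sum_equiv σ (by simp) (by simp)

lemma condRisk_comp_perm (p v : Fin k → ℝ) (σ : Equiv.Perm (Fin k)) :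
    condRisk γ φ p (v ∘ σ) = condRisk γ φ (p ∘ σ.symm) v := by
  simp only [condRisk, gammaPhiLoss_comp_perm]
  exact Fintype.sum_equiv σ _ _ (by simp)

lemma condRisk_sub_condRisk_comp_swap (p v : Fin k → ℝ) (y y' : Fin k) :
    condRisk γ φ p v - condRisk γ φ p (v ∘ Equiv.swap y y')
      = (p y' - p y) * (gammaPhiLoss γ φ v y' - gammaPhiLoss γ φ v y) := by
  rcases eq_or_ne y y' with rfl | hyy'
  · simp
  rw [condRisk_comp_perm, Equiv.symm_swap, condRisk, condRisk, ← sum_sub_distrib,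
    Fintype.sum_eq_add y y' hyy' fun j hj => by
      simp [Equiv.swap_apply_of_ne_of_ne hj.1 hj.2]]
  simp only [Function.comp_apply, Equiv.swap_apply_left, Equiv.swap_apply_right]
  ring

end GammaPhi

theorem limit_gt_bayes_risk_general {k : ℕ} (γ φ : ℝ → ℝ)
    (hγ0 : ∀ x ≥ (0 : ℝ), 0 ≤ γ x)
    (hγC1 : ContDiff ℝ 1 γ) (hγ' : ∀ x ≥ (0 : ℝ), 0 < deriv γ x)
    (hγsup : ¬ BddAbove (γ '' Set.Ici 0))
    (hφ0 : ∀ x, 0 ≤ φ x) (hφdiff : Differentiable ℝ φ)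
    (hφ' : ∀ x, deriv φ x ≤ 0) (hφ'0 : deriv φ 0 < 0)
    (p : Fin k → ℝ) (hp0 : ∀ j, 0 ≤ p j)
    (y y' : Fin k) (hpy : p y < p y')
    (v : ℕ → Fin k → ℝ)
    (hliminf : 0 < liminf (fun t => ((v t y - v t y' : ℝ) : EReal)) atTop)
    (c : ℝ) (hc : Tendsto (fun t => condRisk γ φ p (v t)) atTop (𝓝 c)) :
    (⨅ u : Fin k → ℝ, condRisk γ φ p u) < c := by
  have hyy' : y ≠ y' := by rintro rfl; exact hpy.false
  have hpy' : 0 < p y' := (hp0 y).trans_lt hpy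
  have hφanti : Antitone φ := antitone_of_deriv_nonpos hφdiff hφ'
  have hγmono : StrictMonoOn γ (Ici 0) :=
    strictMonoOn_of_deriv_pos (convex_Ici 0) hγC1.continuous.continuousOn
      fun x hx => hγ' x (interior_subset hx)
  obtain ⟨δ, hδ0, hδev⟩ := exists_pos_eventually_lt_of_pos_liminf hliminf
  have hη : 0 < φ (-δ) - φ δ :=
    sub_pos.mpr (hφanti.lt_of_deriv_neg (neg_neg_of_pos hδ0) hδ0 hφ'0)
  obtain ⟨B, hB⟩ := hγmono.monotoneOn.exists_le_of_not_bddAbove hγsup ((c + 1) / p y')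
  obtain ⟨ε, hε, hgap⟩ := hγmono.exists_pos_le_sub_add hγC1.continuous hη B
  have hcε : c < c + (p y' - p y) * ε := lt_add_of_pos_right _ (mul_pos (sub_pos.mpr hpy) hε)
  obtain ⟨t, hδt, hCt, hCt1⟩ := (hδev.and ((hc.eventually (gt_mem_nhds hcε)).and
    (hc.eventually (gt_mem_nhds (lt_add_one c))))).exists
  have hS' : phiSum φ (v t) y' ≤ B := hB _ (phiSum_nonneg hφ0 _ _) <| by
    rw [le_div_iff₀' hpy', ← gammaPhiLoss_eq_phiSum (γ := γ)]
    exact (mul_gammaPhiLoss_le_condRisk hγ0 hφ0 hp0 _ _).trans hCt1.le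
  have hgain := le_gammaPhiLoss_sub hγmono.monotoneOn hφ0 hφanti hyy' hδ0.le hδt.le hS' hgap
  have hbdd : BddBelow (range (condRisk γ φ p)) :=
    ⟨0, by rintro _ ⟨u, rfl⟩; exact condRisk_nonneg hγ0 hφ0 hp0 u⟩
  calc ⨅ u, condRisk γ φ p u ≤ condRisk γ φ p (v t ∘ Equiv.swap y y') := ciInf_le hbdd _
    _ = condRisk γ φ p (v t)
        - (p y' - p y) * (gammaPhiLoss γ φ (v t) y' - gammaPhiLoss γ φ (v t) y) := by
      rw [← condRisk_sub_condRisk_comp_swap]; ring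
    _ ≤ condRisk γ φ p (v t) - (p y' - p y) * ε := by gcongr
    _ < c := by linarith

/-- If `p_{y'} > p_y`, `liminf_t (v^t_y − v^t_{y'}) > 0` and `lim_t C_p(v^t)` exists and is
finite, then this limit is strictly larger than the conditional Bayes risk `C_p^*`. -/
theorem limit_gt_bayes_risk {k : ℕ} (hk : 2 ≤ k) (γ φ : ℝ → ℝ)
    (hγ0 : ∀ x ≥ (0 : ℝ), 0 ≤ γ x)
    (hγC1 : ContDiff ℝ 1 γ) (hγ' : ∀ x ≥ (0 : ℝ), 0 < deriv γ x)
    (hγsup : ¬ BddAbove (γ '' Set.Ici 0))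
    (hφ0 : ∀ x, 0 ≤ φ x) (hφdiff : Differentiable ℝ φ)
    (hφ' : ∀ x, deriv φ x ≤ 0) (hφ'0 : deriv φ 0 < 0)
    (hφinf : ⨅ x : ℝ, φ x = 0)
    (p : Fin k → ℝ) (hp0 : ∀ j, 0 ≤ p j) (hp1 : ∑ j, p j = 1)
    (y y' : Fin k) (hpy : p y < p y')
    (v : ℕ → Fin k → ℝ)
    (hliminf : 0 < liminf (fun t => ((v t y - v t y' : ℝ) : EReal)) atTop)
    (c : ℝ) (hc : Tendsto (fun t => condRisk γ φ p (v t)) atTop (𝓝 c)) :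
    (⨅ u : Fin k → ℝ, condRisk γ φ p u) < c :=
  limit_gt_bayes_risk_general γ φ hγ0 hγC1 hγ' hγsup hφ0 hφdiff hφ' hφ'0 p hp0 y y' hpy v hliminf c
    hc
end

section
/- Let γ : R_{≥0} → R_{≥0} be continuously differentiable with γ' > 0 on [0,∞) and sup γ = +∞, and φ : R → R_{≥0} differentiable, non-increasing, with φ'(0) < 0 and inf φ = 0. Let L be the associated Gamma-Phi loss on R^ℓ. Suppose q ∈ Δ^ℓ and α ∈ R^ℓ are such that α minimizes C_q over R^ℓ and α_1 = α_2. Then q_1 = q_2. -/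
/-!
At a minimizer `α` the partial derivatives of `C_q` vanish. With `S_y = ∑_{j ≠ y} φ(α_y - α_j)`
and `c_y = q_y γ'(S_y)`, the `i`-th partial derivative is
`c_i ∑_j φ'(α_i - α_j) - ∑_y c_y φ'(α_y - α_i)`. If `α_1 = α_2`, then `S_1 = S_2`, and the two
partial derivatives differ by `(q_1 - q_2) γ'(S_1) ∑_j φ'(α_1 - α_j)`. Here `γ'(S_1) > 0` since
`S_1 ≥ 0`, and the sum is at most its term `φ'(0) < 0`, so `q_1 = q_2`.
-/

open Filter Topology

open Finset

theorem Finset.sum_erase_comp_sub_of_eq {ι : Type*} [Fintype ι] [DecidableEq ι] (g : ℝ → ℝ)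
    {α : ι → ℝ} {a b : ι} (hab : α a = α b) :
    ∑ j ∈ univ.erase a, g (α a - α j) = ∑ j ∈ univ.erase b, g (α b - α j) := by
  have h := (sum_erase_add univ (fun j => g (α b - α j)) (mem_univ a)).trans
    (sum_erase_add univ _ (mem_univ b)).symm
  simp_all

theorem Finset.sum_mul_sum_erase_mul_single_sub {ι R : Type*} [Fintype ι] [DecidableEq ι]
    [CommRing R] (c : ι → R) (d : ι → ι → R) (i : ι) :
    ∑ y, c y * ∑ j ∈ univ.erase y, d y j * ((Pi.single i 1 : ι → R) y - (Pi.single i 1 : ι → R) j) =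
      c i * ∑ j, d i j - ∑ y, c y * d y i := by
  have hfull (y : ι) :
      ∑ j ∈ univ.erase y, d y j * ((Pi.single i 1 : ι → R) y - (Pi.single i 1 : ι → R) j) =
        ∑ j, d y j * ((Pi.single i 1 : ι → R) y - (Pi.single i 1 : ι → R) j) := by
    refine sum_erase univ ?_
    simp
  rw [sum_congr rfl fun y _ => by rw [hfull y]]
  simp only [mul_sub, sum_sub_distrib, mul_sum, Pi.single_apply, mul_ite, mul_one, mul_zero,
    sum_ite_eq', mem_univ, if_true]
  rw [sum_comm]
  simp only [sum_ite_eq', mem_univ, if_true]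

section

variable {k : ℕ} {γ φ : ℝ → ℝ}

theorem hasDerivAt_condRisk_add_smul (hγ : Differentiable ℝ γ) (hφ : Differentiable ℝ φ)
    (q α h : Fin k → ℝ) :
    HasDerivAt (fun t : ℝ => condRisk γ φ q (α + t • h))
      (∑ y, q y * deriv γ (∑ j ∈ univ.erase y, φ (α y - α j)) *
        ∑ j ∈ univ.erase y, deriv φ (α y - α j) * (h y - h j)) 0 := by
  have hline (y j : Fin k) :
      HasDerivAt (fun t : ℝ => (α + t • h) y - (α + t • h) j) (h y - h j) 0 := by
    have hform : (fun t : ℝ => (α + t • h) y - (α + t • h) j) =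
        fun t => (α y - α j) + t * (h y - h j) := by
      funext t
      simp only [Pi.add_apply, Pi.smul_apply, smul_eq_mul]
      ring
    rw [hform]
    simpa using ((hasDerivAt_id (0 : ℝ)).mul_const (h y - h j)).const_add (α y - α j)
  have hinner (y : Fin k) : HasDerivAt
      (fun t : ℝ => ∑ j ∈ univ.erase y, φ ((α + t • h) y - (α + t • h) j))
      (∑ j ∈ univ.erase y, deriv φ (α y - α j) * (h y - h j)) 0 :=
    HasDerivAt.fun_sum fun j _ => (hφ _).hasDerivAt.comp_of_eq 0 (hline y j) (by simp)
  refine HasDerivAt.fun_sum fun y _ => ?_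
  rw [mul_assoc]
  exact ((hγ _).hasDerivAt.comp_of_eq 0 (hinner y) (by simp)).const_mul (q y)

theorem hasDerivAt_condRisk_add_smul_single (hγ : Differentiable ℝ γ)
    (hφ : Differentiable ℝ φ) (q α : Fin k → ℝ) (i : Fin k) :
    HasDerivAt (fun t : ℝ => condRisk γ φ q (α + t • Pi.single i 1))
      (q i * deriv γ (∑ j ∈ univ.erase i, φ (α i - α j)) * ∑ j, deriv φ (α i - α j) -
        ∑ y, q y * deriv γ (∑ j ∈ univ.erase y, φ (α y - α j)) * deriv φ (α y - α i)) 0 := by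
  convert hasDerivAt_condRisk_add_smul hγ hφ q α (Pi.single i 1) using 1
  exact (sum_mul_sum_erase_mul_single_sub
    (fun y => q y * deriv γ (∑ j ∈ univ.erase y, φ (α y - α j)))
    (fun y j => deriv φ (α y - α j)) i).symm

theorem condRisk_stationary_of_forall_le (hγ : Differentiable ℝ γ) (hφ : Differentiable ℝ φ)
    {q α : Fin k → ℝ} (hmin : ∀ v, condRisk γ φ q α ≤ condRisk γ φ q v) (i : Fin k) :
    q i * deriv γ (∑ j ∈ univ.erase i, φ (α i - α j)) * ∑ j, deriv φ (α i - α j) =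
      ∑ y, q y * deriv γ (∑ j ∈ univ.erase y, φ (α y - α j)) * deriv φ (α y - α i) := by
  have hlocal : IsLocalMin (fun t : ℝ => condRisk γ φ q (α + t • Pi.single i 1)) 0 :=
    Eventually.of_forall fun t => by simpa using hmin (α + t • Pi.single i 1)
  exact sub_eq_zero.mp (hlocal.hasDerivAt_eq_zero (hasDerivAt_condRisk_add_smul_single hγ hφ q α i))

end

/-- If `α` minimizes the conditional risk `C_q` of a Gamma-Phi loss and `α_1 = α_2`,
then `q_1 = q_2`. -/
theorem minimizer_equal_coords_imp_equal_probs {l : ℕ} (hl : 2 ≤ l) (γ φ : ℝ → ℝ)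
    (hγC1 : ContDiff ℝ 1 γ) (hγ' : ∀ x ≥ (0 : ℝ), 0 < deriv γ x)
    (hφ0 : ∀ x, 0 ≤ φ x) (hφdiff : Differentiable ℝ φ)
    (hφ' : ∀ x, deriv φ x ≤ 0) (hφ'0 : deriv φ 0 < 0)
    (q : Fin l → ℝ)
    (α : Fin l → ℝ)
    (hmin : ∀ v : Fin l → ℝ, condRisk γ φ q α ≤ condRisk γ φ q v)
    (hα : α ⟨0, by omega⟩ = α ⟨1, by omega⟩) :
    q ⟨0, by omega⟩ = q ⟨1, by omega⟩ := by
  set a : Fin l := ⟨0, by omega⟩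
  set b : Fin l := ⟨1, by omega⟩
  have hγd : Differentiable ℝ γ := hγC1.differentiable one_ne_zero
  have ha := condRisk_stationary_of_forall_le hγd hφdiff hmin a
  have hb := condRisk_stationary_of_forall_le hγd hφdiff hmin b
  rw [sum_erase_comp_sub_of_eq φ hα, hα] at ha
  set S := ∑ j ∈ univ.erase b, φ (α b - α j)
  set F := ∑ j, deriv φ (α b - α j) with hF_def
  have hγS : 0 < deriv γ S := hγ' S (sum_nonneg fun j _ => hφ0 _)
  have hF : F < 0 := by
    have hrest : ∑ j ∈ univ.erase b, deriv φ (α b - α j) ≤ 0 := sum_nonpos fun j _ => hφ' _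
    rw [hF_def, ← add_sum_erase _ _ (mem_univ b), sub_self]
    linarith
  have hdiff : (q a - q b) * (deriv γ S * F) = 0 := by linear_combination ha - hb
  exact sub_eq_zero.mp ((mul_eq_zero.mp hdiff).resolve_right (mul_neg_of_pos_of_neg hγS hF).ne)
end

section
/- Let L : R^k → R^k_{≥0} be a permutation equivariant multiclass loss that is not classification-calibrated. Then there exists p ∈ Δ^k with p_1 ≥ p_2 ≥ ... ≥ p_k and an index z ∈ {2,...,k} such that p_{z−1} > p_z and C_p^* = inf{ C_p(v) : v ∈ R^k, v_z = max_j v_j }. -/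
/-!
Non-calibration yields `p` and a non-maximal label `y` whose constrained risk equals the Bayes
risk. Permutation equivariance makes both risks invariant under relabelling, so we may sort `p`
into non-increasing order, and then move `y` to the first index `z` carrying the value `p y`
(swapping two labels of equal probability leaves `p` unchanged). Since `p y` is not maximal,
`z` is not the first index and the entry just before it is strictly larger.
-/

/-- The conditional risk of a general loss `L` at `p`. -/
noncomputable def condRiskL {k : ℕ} (L : (Fin k → ℝ) → Fin k → ℝ) (p v : Fin k → ℝ) : ℝ :=
  ∑ y, p y * L v y

/-- Classification-calibration of a multiclass loss. -/
def ClassificationCalibrated {k : ℕ} (L : (Fin k → ℝ) → Fin k → ℝ) : Prop :=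
  ∀ p : Fin k → ℝ, (∀ j, 0 ≤ p j) → (∑ j, p j = 1) →
    ∀ y : Fin k, (∃ j, p y < p j) →
      (⨅ v : Fin k → ℝ, condRiskL L p v) <
        sInf {c | ∃ v : Fin k → ℝ, (∀ j, v j ≤ v y) ∧ c = condRiskL L p v}

theorem Antitone.exists_succ_lt_eq {α : Type*} [LinearOrder α] {n : ℕ} {q : Fin n → α}
    (hq : Antitone q) {y i : Fin n} (hy : q y < q i) :
    ∃ z z' : Fin n, (z' : ℕ) + 1 = z ∧ q z < q z' ∧ q z = q y := by
  classical
  set S := Finset.univ.filter fun j => q j ≤ q y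
  have hyS : y ∈ S := by simp [S]
  set z := S.min' ⟨y, hyS⟩
  have hqz : q z = q y :=
    le_antisymm (Finset.mem_filter.1 (S.min'_mem _)).2 (hq (S.min'_le y hyS))
  have hz0 : (z : ℕ) ≠ 0 := fun h =>
    (hy.trans_le (hq (Fin.le_def.2 (by omega)))).ne' hqz
  let z' : Fin n := ⟨z - 1, by omega⟩
  refine ⟨z, z', by simp only [z']; omega, ?_, hqz⟩
  by_contra hz'
  have : z ≤ z' := S.min'_le z' (by simpa [S, hqz] using hz')
  exact absurd (Fin.le_def.1 this) (by simp only [z']; omega)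

theorem exists_perm_antitone_comp {α : Type*} [LinearOrder α] {n : ℕ} (p : Fin n → α) :
    ∃ σ : Equiv.Perm (Fin n), Antitone (p ∘ σ) :=
  ⟨Tuple.sort (OrderDual.toDual ∘ p), monotone_toDual_comp_iff.1 (Tuple.monotone_sort _)⟩

section Risk

variable {k : ℕ}

def PermEquivariant (L : (Fin k → ℝ) → Fin k → ℝ) : Prop :=
  ∀ (σ : Equiv.Perm (Fin k)) (v : Fin k → ℝ), L (fun j => v (σ j)) = fun j => L v (σ j)

noncomputable def bayesRisk (L : (Fin k → ℝ) → Fin k → ℝ) (p : Fin k → ℝ) : ℝ :=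
  ⨅ v : Fin k → ℝ, condRiskL L p v

noncomputable def constrainedRisk (L : (Fin k → ℝ) → Fin k → ℝ) (p : Fin k → ℝ) (z : Fin k) :
    ℝ :=
  sInf {c | ∃ v : Fin k → ℝ, (∀ j, v j ≤ v z) ∧ c = condRiskL L p v}

variable {L : (Fin k → ℝ) → Fin k → ℝ}

theorem condRiskL_comp_perm (hL : PermEquivariant L) (σ : Equiv.Perm (Fin k))
    (p v : Fin k → ℝ) : condRiskL L (p ∘ σ) (v ∘ σ) = condRiskL L p v := by
  unfold condRiskL
  rw [show v ∘ σ = fun j => v (σ j) from rfl, hL σ v]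
  exact Equiv.sum_comp σ fun i => p i * L v i

theorem bayesRisk_comp_perm (hL : PermEquivariant L) (σ : Equiv.Perm (Fin k))
    (p : Fin k → ℝ) : bayesRisk L (p ∘ σ) = bayesRisk L p := by
  unfold bayesRisk
  rw [← (σ.symm.arrowCongr (Equiv.refl ℝ)).iInf_comp]
  exact iInf_congr fun v => condRiskL_comp_perm hL σ p v

theorem constrainedRisk_comp_perm (hL : PermEquivariant L) (σ : Equiv.Perm (Fin k))
    (p : Fin k → ℝ) (z : Fin k) :
    constrainedRisk L (p ∘ σ) z = constrainedRisk L p (σ z) := by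
  unfold constrainedRisk
  congr 1
  ext c
  constructor
  · rintro ⟨w, hw, rfl⟩
    refine ⟨w ∘ σ.symm, fun j => by simpa using hw (σ.symm j), ?_⟩
    rw [← condRiskL_comp_perm hL σ p (w ∘ σ.symm)]
    simp [Function.comp_assoc]
  · rintro ⟨v, hv, rfl⟩
    exact ⟨v ∘ σ, fun j => hv (σ j), (condRiskL_comp_perm hL σ p v).symm⟩

theorem constrainedRisk_eq_of_apply_eq (hL : PermEquivariant L) {p : Fin k → ℝ} {y z : Fin k}
    (h : p y = p z) : constrainedRisk L p y = constrainedRisk L p z := by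
  classical
  have hswap : p ∘ Equiv.swap y z = p := by
    rw [Equiv.comp_swap_eq_update, h, Function.update_eq_self, ← h, Function.update_eq_self]
  conv_lhs => rw [← Equiv.swap_apply_right y z, ← constrainedRisk_comp_perm hL, hswap]

theorem bayesRisk_le_constrainedRisk (hL0 : ∀ v y, 0 ≤ L v y) {p : Fin k → ℝ}
    (hp0 : ∀ j, 0 ≤ p j) (z : Fin k) : bayesRisk L p ≤ constrainedRisk L p z := by
  have hbdd : BddBelow (Set.range (condRiskL L p)) :=
    ⟨0, by
      rintro c ⟨v, rfl⟩
      exact Finset.sum_nonneg fun i _ => mul_nonneg (hp0 i) (hL0 v i)⟩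
  refine le_csInf ⟨condRiskL L p 0, 0, fun j => le_rfl, rfl⟩ ?_
  rintro c ⟨v, -, rfl⟩
  exact ciInf_le hbdd v

end Risk

theorem not_calibrated_structure_general {k : ℕ}
    (L : (Fin k → ℝ) → Fin k → ℝ)
    (hL0 : ∀ v y, 0 ≤ L v y)
    (hequiv : ∀ (σ : Equiv.Perm (Fin k)) (v : Fin k → ℝ),
      L (fun j => v (σ j)) = fun j => L v (σ j))
    (hnc : ¬ ClassificationCalibrated L) :
    ∃ p : Fin k → ℝ, (∀ j, 0 ≤ p j) ∧ (∑ j, p j = 1) ∧ Antitone p ∧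
      ∃ z z' : Fin k, (z' : ℕ) + 1 = (z : ℕ) ∧ p z' > p z ∧
        (⨅ v : Fin k → ℝ, condRiskL L p v)
          = sInf {c | ∃ v : Fin k → ℝ, (∀ j, v j ≤ v z) ∧ c = condRiskL L p v} := by
  simp only [ClassificationCalibrated, not_forall, not_lt] at hnc
  obtain ⟨p, hp0, hp1, y, ⟨i, hyi⟩, hle⟩ := hnc
  have hpy : bayesRisk L p = constrainedRisk L p y :=
    le_antisymm (bayesRisk_le_constrainedRisk hL0 hp0 y) hle
  obtain ⟨σ, hσ⟩ := exists_perm_antitone_comp p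
  obtain ⟨z, z', hz'z, hdrop, hpz⟩ :=
    hσ.exists_succ_lt_eq (y := σ.symm y) (i := σ.symm i) (by simpa using hyi)
  refine ⟨p ∘ σ, fun j => hp0 (σ j), (Equiv.sum_comp σ p).trans hp1, hσ, z, z', hz'z, hdrop, ?_⟩
  calc bayesRisk L (p ∘ σ) = constrainedRisk L p y := (bayesRisk_comp_perm hequiv σ p).trans hpy
    _ = constrainedRisk L (p ∘ σ) (σ.symm y) := by
      rw [constrainedRisk_comp_perm hequiv, Equiv.apply_symm_apply]
    _ = constrainedRisk L (p ∘ σ) z := constrainedRisk_eq_of_apply_eq hequiv hpz.symm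

/-- If a permutation equivariant loss is not classification-calibrated, there exist a
probability vector `p` with non-increasing entries and an index `z ≥ 1` with `p_{z−1} > p_z`
such that the Bayes conditional risk is attained in the limit over score vectors maximized
at coordinate `z`. -/
theorem not_calibrated_structure {k : ℕ} (hk : 2 ≤ k)
    (L : (Fin k → ℝ) → Fin k → ℝ)
    (hL0 : ∀ v y, 0 ≤ L v y)
    (hequiv : ∀ (σ : Equiv.Perm (Fin k)) (v : Fin k → ℝ),
      L (fun j => v (σ j)) = fun j => L v (σ j))
    (hnc : ¬ ClassificationCalibrated L) :
    ∃ p : Fin k → ℝ, (∀ j, 0 ≤ p j) ∧ (∑ j, p j = 1) ∧ Antitone p ∧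
      ∃ z z' : Fin k, (z' : ℕ) + 1 = (z : ℕ) ∧ p z' > p z ∧
        (⨅ v : Fin k → ℝ, condRiskL L p v)
          = sInf {c | ∃ v : Fin k → ℝ, (∀ j, v j ≤ v z) ∧ c = condRiskL L p v} :=
  not_calibrated_structure_general L hL0 hequiv hnc
end

section
/- Let γ be continuously differentiable with γ' > 0 on [0,∞) and sup γ = +∞, and let φ be differentiable, non-increasing with φ'(0) < 0 and inf φ = 0. Then the Gamma-Phi loss L_y(v) = γ(Σ_{j ≠ y} φ(v_y − v_j)) is classification-calibrated: for all p ∈ Δ^k and all y with p_y < max_j p_j, one has C_p^* < inf{ C_p(v) : v ∈ R^k, v_y = max_j v_j }. -/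
/-!
Suppose the constrained infimum `B` is also the global one, and take vectors `v n` with
`v n y` maximal whose risks tend to `B`. Swapping the coordinates `y` and `j` lowers the risk by
`(p j - p y) (L_j - L_y)`, so this gap tends to `0`. The argument of `γ` in `L_j` exceeds the one
in `L_y` by at least `φ 0 - φ (v n y - v n j)`; since `γ'` is bounded below on bounded sets and `φ`
drops strictly to the right of `0`, this forces `v n y - v n j → 0`.

Along a subsequence every coordinate `v n i - v n y` tends either to a real `τ i` (for `i ∈ F`)
or to `-∞`. Perturbing by `t (e_j - e_y)`, the risk differences converge to those of the risk
restricted to `F` at `τ + t (e_j - e_y)`; a coordinate escaping to `-∞` with `p i > 0` keeps its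
loss bounded, which makes `φ` bounded, so its own perturbation terms vanish. Hence this restricted
risk has a local minimum at `t = 0`. But `τ y = τ j = 0`, so swapping `y` and `j` reflects `t`,
and the derivative at `0` is `(p j - p y) γ'(Λ) Λ'` with `Λ' ≤ 2 φ'(0) < 0`.
-/

open Filter Topology Finset Set

section MarginSums

variable {ι : Type*} [DecidableEq ι]

noncomputable def marginSum (φ : ℝ → ℝ) (s : Finset ι) (v : ι → ℝ) (m : ι) : ℝ :=
  ∑ i ∈ s.erase m, φ (v m - v i)

noncomputable def restrictedRisk (γ φ : ℝ → ℝ) (p : ι → ℝ) (s : Finset ι) (v : ι → ℝ) : ℝ :=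
  ∑ m ∈ s, p m * γ (marginSum φ s v m)

variable {γ φ : ℝ → ℝ} {p : ι → ℝ} {s : Finset ι}

theorem condRisk_eq_restrictedRisk {k : ℕ} (γ φ : ℝ → ℝ) (p v : Fin k → ℝ) :
    condRisk γ φ p v = restrictedRisk γ φ p univ v :=
  rfl

theorem marginSum_nonneg (hφ0 : ∀ x, 0 ≤ φ x) (v : ι → ℝ) (m : ι) : 0 ≤ marginSum φ s v m :=
  sum_nonneg fun _ _ => hφ0 _

theorem restrictedRisk_nonneg (hγ0 : ∀ x ≥ 0, 0 ≤ γ x) (hφ0 : ∀ x, 0 ≤ φ x) (hp0 : ∀ i, 0 ≤ p i)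
    (v : ι → ℝ) : 0 ≤ restrictedRisk γ φ p s v :=
  sum_nonneg fun m _ => mul_nonneg (hp0 m) (hγ0 _ (marginSum_nonneg hφ0 v m))

theorem marginSum_sub_const (v : ι → ℝ) (a : ℝ) (m : ι) :
    marginSum φ s (fun i => v i - a) m = marginSum φ s v m := by
  simp only [marginSum, sub_sub_sub_cancel_right]

theorem restrictedRisk_sub_const (v : ι → ℝ) (a : ℝ) :
    restrictedRisk γ φ p s (fun i => v i - a) = restrictedRisk γ φ p s v := by
  simp only [restrictedRisk, marginSum_sub_const]

theorem swap_apply_mem_iff {y j i : ι} (hy : y ∈ s) (hj : j ∈ s) :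
    Equiv.swap y j i ∈ s ↔ i ∈ s := by
  rw [Equiv.swap_apply_def]
  split_ifs with h₁ h₂ <;> simp_all

theorem marginSum_comp_swap {y j : ι} (hy : y ∈ s) (hj : j ∈ s) (v : ι → ℝ) (m : ι) :
    marginSum φ s (v ∘ Equiv.swap y j) m = marginSum φ s v (Equiv.swap y j m) :=
  sum_equiv (Equiv.swap y j) (fun i => by simp [swap_apply_mem_iff hy hj]) fun _ _ => rfl

theorem restrictedRisk_comp_swap {y j : ι} (hy : y ∈ s) (hj : j ∈ s) (v : ι → ℝ) :
    restrictedRisk γ φ p s (v ∘ Equiv.swap y j) = restrictedRisk γ φ p s v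
      - (p j - p y) * (γ (marginSum φ s v j) - γ (marginSum φ s v y)) := by
  rcases eq_or_ne y j with rfl | hyj
  · simp
  set g : ι → ℝ := fun m => γ (marginSum φ s v m)
  have hsupp : {a | Equiv.swap y j a ≠ a} ⊆ s := fun a ha => by
    rcases (Equiv.swap_apply_ne_self_iff.1 ha).2 with rfl | rfl <;> assumption
  have hperm : restrictedRisk γ φ p s (v ∘ Equiv.swap y j)
      = ∑ m ∈ s, p (Equiv.swap y j m) * g m := by
    simp only [restrictedRisk, marginSum_comp_swap hy hj]
    simpa using (Equiv.swap y j).sum_comp s (fun m => p (Equiv.swap y j m) * g m) hsupp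
  have hdiff : ∑ m ∈ s, (p (Equiv.swap y j m) - p m) * g m
      = (p j - p y) * g y + (p y - p j) * g j := by
    rw [sum_eq_add y j hyj (fun m _ hm => ?_) (absurd hy) (absurd hj)]
    · simp
    · simp [Equiv.swap_apply_of_ne_of_ne hm.1 hm.2]
  have hsplit : ∑ m ∈ s, p (Equiv.swap y j m) * g m = restrictedRisk γ φ p s v
      + ∑ m ∈ s, (p (Equiv.swap y j m) - p m) * g m := by
    simp only [restrictedRisk, ← sum_add_distrib]
    exact sum_congr rfl fun m _ => by ring
  rw [hperm, hsplit, hdiff]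
  ring

theorem sub_le_marginSum_sub_marginSum (hφ : Antitone φ) {u : ι → ℝ} {y j : ι} (hy : y ∈ s)
    (hj : j ∈ s) (hyj : y ≠ j) (h : u j ≤ u y) :
    φ 0 - φ (u y - u j) ≤ marginSum φ s u j - marginSum φ s u y := by
  rw [marginSum, marginSum, ← add_sum_erase _ _ (mem_erase.2 ⟨hyj, hy⟩),
    ← add_sum_erase _ _ (mem_erase.2 ⟨hyj.symm, hj⟩), erase_right_comm]
  have hrest : ∑ i ∈ (s.erase y).erase j, φ (u y - u i)
      ≤ ∑ i ∈ (s.erase y).erase j, φ (u j - u i) :=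
    sum_le_sum fun i _ => hφ (by linarith)
  have hhead : φ 0 ≤ φ (u j - u y) := hφ (by linarith)
  linarith

end MarginSums

section RealAnalysis

variable {α : Type*} {l : Filter α}

theorem Antitone.apply_lt_apply_of_deriv_neg {φ : ℝ → ℝ} (hφ : Antitone φ) {a x : ℝ}
    (hd : deriv φ a < 0) (hx : a < x) : φ x < φ a := by
  by_contra! hle
  have hmin : IsLocalMin φ a := eventually_of_mem (Iio_mem_nhds hx) fun t ht => hle.trans (hφ ht.le)
  exact hd.ne hmin.deriv_eq_zero

theorem Antitone.tendsto_of_tendsto_apply {φ : ℝ → ℝ} (hφ : Antitone φ) {a : ℝ}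
    (hd : deriv φ a < 0) {x : α → ℝ} (hx : ∀ᶠ n in l, a ≤ x n)
    (h : Tendsto (fun n => φ (x n)) l (𝓝 (φ a))) : Tendsto x l (𝓝 a) := by
  refine tendsto_order.2 ⟨fun b hb => hx.mono fun n hn => hb.trans_le hn, fun b hb => ?_⟩
  filter_upwards [h.eventually_const_lt (hφ.apply_lt_apply_of_deriv_neg hd hb)] with n hn
  by_contra! hbn
  exact (hφ hbn).not_gt hn

theorem Antitone.tendsto_apply_add_sub_apply {φ : ℝ → ℝ} (hφ : Antitone φ) {X : α → ℝ}
    (hX : Tendsto X l atBot) {N : ℝ} (hN : ∀ n, φ (X n) ≤ N) (d : ℝ) :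
    Tendsto (fun n => φ (X n + d) - φ (X n)) l (𝓝 0) := by
  rcases l.eq_or_neBot with rfl | hl
  · exact tendsto_bot
  have hbdd : BddAbove (range φ) := by
    refine ⟨N, ?_⟩
    rintro _ ⟨x, rfl⟩
    obtain ⟨n, hn⟩ := (hX.eventually (eventually_le_atBot x)).exists
    exact (hφ hn).trans (hN n)
  have hlim := tendsto_atBot_ciSup hφ hbdd
  simpa using (hlim.comp (tendsto_atBot_add_const_right _ d hX)).sub (hlim.comp hX)

theorem Continuous.tendsto_apply_sub_apply {f : ℝ → ℝ} (hf : Continuous f) {a b : α → ℝ}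
    {lo hi : ℝ} (ha : ∀ n, a n ∈ Icc lo hi) (h : Tendsto (fun n => b n - a n) l (𝓝 0)) :
    Tendsto (fun n => f (b n) - f (a n)) l (𝓝 0) := by
  have hU : UniformContinuousOn f (Icc (lo - 1) (hi + 1)) :=
    isCompact_Icc.uniformContinuousOn_of_continuous hf.continuousOn
  rw [Metric.tendsto_nhds] at h ⊢
  intro ε hε
  obtain ⟨δ, hδ, hfδ⟩ := Metric.uniformContinuousOn_iff.1 hU ε hε
  filter_upwards [h (min δ 1) (by positivity)] with n hn
  rw [Real.dist_eq, sub_zero] at hn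
  have hδn := abs_lt.1 (hn.trans_le (min_le_right δ 1))
  obtain ⟨hlo, hhi⟩ := ha n
  rw [Real.dist_eq, sub_zero]
  refine hfδ (b n) ⟨by linarith, by linarith⟩ (a n) ⟨by linarith, by linarith⟩ ?_
  rw [Real.dist_eq]
  exact hn.trans_le (min_le_left δ 1)

theorem ContDiff.exists_pos_mul_sub_le_sub {f : ℝ → ℝ} (hf : ContDiff ℝ 1 f) {a b : ℝ}
    (hpos : ∀ x ∈ Icc a b, 0 < deriv f x) :
    ∃ c > 0, ∀ x ∈ Icc a b, ∀ y ∈ Icc a b, x ≤ y → c * (y - x) ≤ f y - f x := by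
  obtain ⟨c, hc, hcle⟩ :=
    isCompact_Icc.exists_forall_le' (hf.continuous_deriv le_rfl).continuousOn hpos
  exact ⟨c, hc, (convex_Icc a b).mul_sub_le_image_sub_of_le_deriv hf.continuous.continuousOn
    (hf.differentiable one_ne_zero).differentiableOn fun x hx => hcle x (interior_subset hx)⟩

theorem exists_subseq_tendsto_or_tendsto_atBot {ι : Type*} [Fintype ι] (x : ℕ → ι → ℝ) {M : ℝ}
    (hx : ∀ n i, x n i ≤ M) :
    ∃ σ : ℕ → ℕ, StrictMono σ ∧ ∃ (F : Finset ι) (τ : ι → ℝ),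
      (∀ i ∈ F, Tendsto (fun n => x (σ n) i) atTop (𝓝 (τ i))) ∧
      ∀ i ∉ F, Tendsto (fun n => x (σ n) i) atTop atBot := by
  classical
  obtain ⟨t, σ, hσ, ht⟩ := CompactSpace.tendsto_subseq fun n i => (x n i : EReal)
  have hti : ∀ i, Tendsto (fun n => (x (σ n) i : EReal)) atTop (𝓝 (t i)) := tendsto_pi_nhds.1 ht
  have htop : ∀ i, t i ≠ ⊤ := fun i => ne_top_of_le_ne_top (EReal.coe_ne_top M)
    (le_of_tendsto' (hti i) fun n => EReal.coe_le_coe_iff.2 (hx (σ n) i))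
  refine ⟨σ, hσ, univ.filter (fun i => t i ≠ ⊥), fun i => (t i).toReal, fun i hi => ?_,
    fun i hi => ?_⟩
  · rw [← EReal.tendsto_coe, EReal.coe_toReal (htop i) (mem_filter.1 hi).2]
    exact hti i
  · have hbot : t i = ⊥ := by simpa using hi
    rw [← EReal.tendsto_coe_nhds_bot_iff, ← hbot]
    exact hti i

end RealAnalysis

section Limits

variable {ι : Type*} [Fintype ι] [DecidableEq ι] {α : Type*} {l : Filter α}
  {γ φ : ℝ → ℝ} {p : ι → ℝ}

theorem tendsto_marginSum {x : α → ι → ℝ} {F : Finset ι} {τ : ι → ℝ} (hφc : Continuous φ)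
    (hφtop : Tendsto φ atTop (𝓝 0)) (hF : ∀ i ∈ F, Tendsto (fun n => x n i) l (𝓝 (τ i)))
    (hFc : ∀ i ∉ F, Tendsto (fun n => x n i) l atBot) {m : ι} (hm : m ∈ F) :
    Tendsto (fun n => marginSum φ univ (x n) m) l (𝓝 (marginSum φ F τ m)) := by
  have hlim : marginSum φ F τ m = ∑ i ∈ univ.erase m, if i ∈ F then φ (τ m - τ i) else 0 := by
    rw [marginSum, ← sum_filter]
    congr 1
    ext i
    simp [and_comm]
  rw [hlim]
  refine tendsto_finsetSum _ fun i _ => ?_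
  split_ifs with hi
  · exact (hφc.tendsto _).comp ((hF m hm).sub (hF i hi))
  · simpa [sub_eq_add_neg, Function.comp_def] using
      hφtop.comp ((hF m hm).add_atTop (tendsto_neg_atBot_atTop.comp (hFc i hi)))

theorem tendsto_marginSum_add_sub_marginSum (hφ : Antitone φ) (hφ0 : ∀ x, 0 ≤ φ x)
    {x : α → ι → ℝ} {d : ι → ℝ} {m : ι} (hdm : d m = 0)
    (hd : ∀ i, d i ≠ 0 → Tendsto (fun n => x n m - x n i) l atBot)
    (hbdd : BddAbove (range fun n => marginSum φ univ (x n) m)) :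
    Tendsto (fun n => marginSum φ univ (x n + d) m - marginSum φ univ (x n) m) l (𝓝 0) := by
  obtain ⟨N, hN⟩ := hbdd
  have hterm : ∀ i ∈ univ.erase m,
      Tendsto (fun n => φ ((x n + d) m - (x n + d) i) - φ (x n m - x n i)) l (𝓝 0) := by
    intro i hi
    by_cases hdi : d i = 0
    · simp [hdi, hdm, tendsto_const_nhds]
    have hφN : ∀ n, φ (x n m - x n i) ≤ N := fun n =>
      (single_le_sum (f := fun i => φ (x n m - x n i)) (fun i _ => hφ0 _) hi).trans
        (hN ⟨n, rfl⟩)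
    refine (hφ.tendsto_apply_add_sub_apply (hd i hdi) hφN (-d i)).congr fun n => ?_
    rw [Pi.add_apply, Pi.add_apply, hdm]
    ring_nf
  simpa [marginSum, ← sum_sub_distrib] using tendsto_finsetSum _ hterm

theorem tendsto_restrictedRisk_add_sub (hγ : Continuous γ) (hφc : Continuous φ)
    (hφ : Antitone φ) (hφ0 : ∀ x, 0 ≤ φ x) (hφtop : Tendsto φ atTop (𝓝 0)) (hp0 : ∀ i, 0 ≤ p i)
    {x : α → ι → ℝ} {F : Finset ι} {τ : ι → ℝ}
    (hF : ∀ i ∈ F, Tendsto (fun n => x n i) l (𝓝 (τ i)))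
    (hFc : ∀ i ∉ F, Tendsto (fun n => x n i) l atBot)
    (hbdd : ∀ m, 0 < p m → BddAbove (range fun n => marginSum φ univ (x n) m))
    {d : ι → ℝ} (hd : ∀ i ∉ F, d i = 0) :
    Tendsto (fun n => restrictedRisk γ φ p univ (x n + d) - restrictedRisk γ φ p univ (x n)) l
      (𝓝 (restrictedRisk γ φ p F (τ + d) - restrictedRisk γ φ p F τ)) := by
  have hF' : ∀ i ∈ F, Tendsto (fun n => (x n + d) i) l (𝓝 ((τ + d) i)) := fun i hi =>
    (hF i hi).add_const (d i)
  have hFc' : ∀ i ∉ F, Tendsto (fun n => (x n + d) i) l atBot := fun i hi => by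
    simpa [hd i hi] using hFc i hi
  have hterm : ∀ m, Tendsto
      (fun n => p m * (γ (marginSum φ univ (x n + d) m) - γ (marginSum φ univ (x n) m))) l
      (𝓝 (if m ∈ F then p m * (γ (marginSum φ F (τ + d) m) - γ (marginSum φ F τ m)) else 0)) := by
    intro m
    split_ifs with hm
    · exact (((hγ.tendsto _).comp (tendsto_marginSum hφc hφtop hF' hFc' hm)).sub
        ((hγ.tendsto _).comp (tendsto_marginSum hφc hφtop hF hFc hm))).const_mul _
    rcases (hp0 m).eq_or_lt with hpm | hpm
    · simp [← hpm, tendsto_const_nhds]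
    have hdiff := tendsto_marginSum_add_sub_marginSum hφ hφ0 (hd m hm)
      (fun i hi => (hFc m hm).atBot_add ((hF i (not_not.1 (mt (hd i) hi))).neg))
      (hbdd m hpm)
    obtain ⟨N, hN⟩ := hbdd m hpm
    simpa using (hγ.tendsto_apply_sub_apply
      (fun n => ⟨marginSum_nonneg hφ0 _ _, hN ⟨n, rfl⟩⟩) hdiff).const_mul (p m)
  convert tendsto_finsetSum univ fun m _ => hterm m using 1
  · ext n
    simp [restrictedRisk, mul_sub, sum_sub_distrib]
  · rw [sum_ite_mem, Finset.univ_inter]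
    simp [restrictedRisk, mul_sub, sum_sub_distrib]

end Limits

section Calibration

variable {ι : Type*} [DecidableEq ι] {γ φ : ℝ → ℝ} {p : ι → ℝ}

theorem hasDerivAt_marginSum_add_smul (hφ : Differentiable ℝ φ) (s : Finset ι) (τ c : ι → ℝ)
    (m : ι) : HasDerivAt (fun t : ℝ => marginSum φ s (τ + t • c) m)
      (∑ i ∈ s.erase m, deriv φ (τ m - τ i) * (c m - c i)) 0 := by
  refine HasDerivAt.fun_sum fun i _ => ?_
  have hlin : HasDerivAt (fun t : ℝ => (τ + t • c) m - (τ + t • c) i) (c m - c i) 0 := by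
    simpa using (((hasDerivAt_id (0 : ℝ)).mul_const (c m)).const_add (τ m)).fun_sub
      (((hasDerivAt_id (0 : ℝ)).mul_const (c i)).const_add (τ i))
  simpa [Function.comp_def] using (hφ _).hasDerivAt.comp (0 : ℝ) hlin

theorem add_smul_comp_swap {τ : ι → ℝ} {y j : ι} (hyj : y ≠ j) (hτ : τ y = τ j) (t : ℝ) :
    (τ + t • (Pi.single j 1 - Pi.single y 1)) ∘ Equiv.swap y j
      = τ + (-t) • (Pi.single j 1 - Pi.single y 1) := by
  ext i
  rcases eq_or_ne i y with rfl | hiy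
  · simp [hyj, hτ]
  rcases eq_or_ne i j with rfl | hij
  · simp [hyj, hτ]
  simp [Equiv.swap_apply_of_ne_of_ne hiy hij, hiy, hij]

theorem exists_neg_hasDerivAt_marginSum (hφ : Differentiable ℝ φ) (hφ' : ∀ x, deriv φ x ≤ 0)
    (hφ'0 : deriv φ 0 < 0) {s : Finset ι} {τ : ι → ℝ} {y j : ι} (hy : y ∈ s) (hyj : y ≠ j)
    (hτ : τ y = τ j) : ∃ Λ' < 0,
      HasDerivAt (fun t : ℝ => marginSum φ s (τ + t • (Pi.single j 1 - Pi.single y 1)) j) Λ' 0 := by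
  refine ⟨_, ?_, hasDerivAt_marginSum_add_smul hφ s τ _ j⟩
  rw [← add_sum_erase _ _ (mem_erase.2 ⟨hyj, hy⟩)]
  have hyterm : deriv φ (τ j - τ y) * ((Pi.single j 1 - Pi.single y 1 : ι → ℝ) j
      - (Pi.single j 1 - Pi.single y 1 : ι → ℝ) y) = 2 * deriv φ 0 := by
    simp [hyj, hyj.symm, hτ]
    ring
  have hrest : ∑ i ∈ (s.erase j).erase y, deriv φ (τ j - τ i)
      * ((Pi.single j 1 - Pi.single y 1 : ι → ℝ) j - (Pi.single j 1 - Pi.single y 1 : ι → ℝ) i)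
      ≤ 0 := by
    refine sum_nonpos fun i hi => mul_nonpos_of_nonpos_of_nonneg (hφ' _) ?_
    obtain ⟨hiy, hij, -⟩ := mem_erase.1 hi |>.imp_right mem_erase.1
    simp [hiy, hij, hyj.symm]
  linarith

theorem not_isLocalMin_restrictedRisk (hγ : Differentiable ℝ γ) (hγ' : ∀ x ≥ 0, 0 < deriv γ x)
    (hφ : Differentiable ℝ φ) (hφ' : ∀ x, deriv φ x ≤ 0) (hφ'0 : deriv φ 0 < 0)
    (hφ0 : ∀ x, 0 ≤ φ x) {s : Finset ι} {τ : ι → ℝ} {y j : ι} (hy : y ∈ s) (hj : j ∈ s)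
    (hyj : y ≠ j) (hτ : τ y = τ j) (hpyj : p y < p j) :
    ¬ IsLocalMin
      (fun t : ℝ => restrictedRisk γ φ p s (τ + t • (Pi.single j 1 - Pi.single y 1))) 0 := by
  intro hmin
  set R : ℝ → ℝ := fun t => restrictedRisk γ φ p s (τ + t • (Pi.single j 1 - Pi.single y 1))
  set Λ : ℝ → ℝ := fun t => marginSum φ s (τ + t • (Pi.single j 1 - Pi.single y 1)) j
  have hsym : ∀ t, R (-t) = R t - (p j - p y) * (γ (Λ t) - γ (Λ (-t))) := by
    intro t
    have hΛ : marginSum φ s (τ + t • (Pi.single j 1 - Pi.single y 1)) y = Λ (-t) := by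
      rw [← neg_neg t, ← add_smul_comp_swap hyj hτ (-t), marginSum_comp_swap hy hj,
        Equiv.swap_apply_left, neg_neg]
    simp only [R, ← add_smul_comp_swap hyj hτ t, restrictedRisk_comp_swap hy hj, hΛ, Λ]
  obtain ⟨Λ', hΛ'neg, hΛ'⟩ := exists_neg_hasDerivAt_marginSum hφ hφ' hφ'0 hy hyj hτ
  have hR : HasDerivAt R 0 0 := by
    have hRd : DifferentiableAt ℝ R 0 := by
      simp only [R, restrictedRisk, marginSum, Pi.add_apply, Pi.smul_apply, smul_eq_mul]
      fun_prop
    simpa [hmin.deriv_eq_zero] using hRd.hasDerivAt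
  have hg : HasDerivAt (fun t => γ (Λ t)) (deriv γ (Λ 0) * Λ') 0 :=
    (hγ (Λ 0)).hasDerivAt.comp 0 hΛ'
  have hg' : HasDerivAt (fun t => γ (Λ (-t))) (deriv γ (Λ 0) * Λ' * -1) 0 :=
    (by rwa [neg_zero] : HasDerivAt (fun t => γ (Λ t)) _ (-0)).comp 0 (hasDerivAt_neg (0 : ℝ))
  have hRneg : HasDerivAt (fun t => R (-t)) (0 * -1) 0 :=
    (by rwa [neg_zero] : HasDerivAt R _ (-0)).comp 0 (hasDerivAt_neg (0 : ℝ))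
  have hRneg' : HasDerivAt (fun t => R (-t))
      (0 - (p j - p y) * (deriv γ (Λ 0) * Λ' - deriv γ (Λ 0) * Λ' * -1)) 0 :=
    (hR.sub ((hg.sub hg').const_mul (p j - p y))).congr_of_eventuallyEq
      (Eventually.of_forall hsym)
  have hγpos : 0 < deriv γ (Λ 0) := hγ' _ (marginSum_nonneg hφ0 _ _)
  nlinarith [hRneg.unique hRneg', mul_pos (sub_pos.2 hpyj) (mul_pos hγpos (neg_pos.2 hΛ'neg))]

end Calibration

section Minimizing

variable {ι : Type*} [Fintype ι] [DecidableEq ι] {γ φ : ℝ → ℝ} {p : ι → ℝ}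

theorem bddAbove_marginSum_of_bddAbove_restrictedRisk (hγ0 : ∀ x ≥ 0, 0 ≤ γ x)
    (hγ : MonotoneOn γ (Ici 0)) (hγsup : ¬ BddAbove (γ '' Ici 0)) (hφ0 : ∀ x, 0 ≤ φ x)
    (hp0 : ∀ i, 0 ≤ p i) {m : ι} (hm : 0 < p m) {α : Type*} {v : α → ι → ℝ}
    (h : BddAbove (range fun n => restrictedRisk γ φ p univ (v n))) :
    BddAbove (range fun n => marginSum φ univ (v n) m) := by
  obtain ⟨R, hR⟩ := h
  obtain ⟨_, ⟨N, hN0, rfl⟩, hN⟩ := not_bddAbove_iff.1 hγsup (R / p m)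
  refine ⟨N, ?_⟩
  rintro _ ⟨n, rfl⟩
  by_contra! hlt
  have hterm : p m * γ (marginSum φ univ (v n) m) ≤ restrictedRisk γ φ p univ (v n) :=
    single_le_sum (f := fun i => p i * γ (marginSum φ univ (v n) i))
      (fun i _ => mul_nonneg (hp0 i) (hγ0 _ (marginSum_nonneg hφ0 _ _))) (mem_univ m)
  have hmono : γ N ≤ γ (marginSum φ univ (v n) m) := hγ hN0 (le_trans hN0 hlt.le) hlt.le
  rw [div_lt_iff₀ hm] at hN
  nlinarith [hR ⟨n, rfl⟩]

theorem tendsto_sub_of_tendsto_restrictedRisk (hγ : ContDiff ℝ 1 γ)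
    (hγ' : ∀ x ≥ 0, 0 < deriv γ x) (hφ : Antitone φ) (hφ0 : ∀ x, 0 ≤ φ x)
    (hφ'0 : deriv φ 0 < 0) {y j : ι} (hpyj : p y < p j) {v : ℕ → ι → ℝ} {B : ℝ}
    (hv : ∀ n, v n j ≤ v n y) (hB : ∀ u, B ≤ restrictedRisk γ φ p univ u)
    (hlim : Tendsto (fun n => restrictedRisk γ φ p univ (v n)) atTop (𝓝 B))
    (hbdd : BddAbove (range fun n => marginSum φ univ (v n) j)) :
    Tendsto (fun n => v n y - v n j) atTop (𝓝 0) := by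
  have hyj : y ≠ j := by rintro rfl; exact lt_irrefl _ hpyj
  obtain ⟨N, hN⟩ := hbdd
  obtain ⟨c, hc, hlow⟩ := hγ.exists_pos_mul_sub_le_sub fun x hx => hγ' x hx.1
  have hκ : 0 < (p j - p y) * c := mul_pos (sub_pos.2 hpyj) hc
  refine hφ.tendsto_of_tendsto_apply hφ'0 (Eventually.of_forall fun n => sub_nonneg.2 (hv n)) ?_
  have hlower : Tendsto (fun n => φ 0 - (restrictedRisk γ φ p univ (v n) - B) / ((p j - p y) * c))
      atTop (𝓝 (φ 0)) := by
    simpa using ((hlim.sub_const B).div_const ((p j - p y) * c)).const_sub (φ 0)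
  refine tendsto_of_tendsto_of_tendsto_of_le_of_le hlower tendsto_const_nhds (fun n => ?_)
    fun n => hφ (sub_nonneg.2 (hv n))
  set M : ι → ℝ := marginSum φ univ (v n)
  have hgap : φ 0 - φ (v n y - v n j) ≤ M j - M y :=
    sub_le_marginSum_sub_marginSum hφ (mem_univ y) (mem_univ j) hyj (hv n)
  have hdrop : 0 ≤ φ 0 - φ (v n y - v n j) := sub_nonneg.2 (hφ (sub_nonneg.2 (hv n)))
  have hγgap : c * (M j - M y) ≤ γ (M j) - γ (M y) :=
    hlow _ ⟨marginSum_nonneg hφ0 _ _, by linarith [hN ⟨n, rfl⟩]⟩ _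
      ⟨marginSum_nonneg hφ0 _ _, hN ⟨n, rfl⟩⟩ (by linarith)
  rw [sub_le_comm, le_div_iff₀ hκ]
  calc (φ 0 - φ (v n y - v n j)) * ((p j - p y) * c)
      ≤ (p j - p y) * (c * (M j - M y)) := by nlinarith
    _ ≤ (p j - p y) * (γ (M j) - γ (M y)) :=
      mul_le_mul_of_nonneg_left hγgap (sub_pos.2 hpyj).le
    _ = restrictedRisk γ φ p univ (v n) - restrictedRisk γ φ p univ (v n ∘ Equiv.swap y j) := by
      rw [restrictedRisk_comp_swap (mem_univ y) (mem_univ j)]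
      ring
    _ ≤ restrictedRisk γ φ p univ (v n) - B := by linarith [hB (v n ∘ Equiv.swap y j)]

theorem restrictedRisk_le_restrictedRisk_add_of_tendsto (hγ : Continuous γ)
    (hφc : Continuous φ) (hφ : Antitone φ) (hφ0 : ∀ x, 0 ≤ φ x) (hφtop : Tendsto φ atTop (𝓝 0))
    (hp0 : ∀ i, 0 ≤ p i)
    {w : ℕ → ι → ℝ} {F : Finset ι} {τ : ι → ℝ}
    (hF : ∀ i ∈ F, Tendsto (fun n => w n i) atTop (𝓝 (τ i)))
    (hFc : ∀ i ∉ F, Tendsto (fun n => w n i) atTop atBot)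
    (hbdd : ∀ m, 0 < p m → BddAbove (range fun n => marginSum φ univ (w n) m)) {B : ℝ}
    (hlim : Tendsto (fun n => restrictedRisk γ φ p univ (w n)) atTop (𝓝 B))
    (hB : ∀ u, B ≤ restrictedRisk γ φ p univ u) {d : ι → ℝ} (hd : ∀ i ∉ F, d i = 0) :
    restrictedRisk γ φ p F τ ≤ restrictedRisk γ φ p F (τ + d) := by
  have hnonneg := le_of_tendsto_of_tendsto (hlim.const_sub B)
    (tendsto_restrictedRisk_add_sub hγ hφc hφ hφ0 hφtop hp0 hF hFc hbdd hd)
    (Eventually.of_forall fun n => sub_le_sub_right (hB _) _)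
  simpa using hnonneg

theorem exists_restrictedRisk_lt_of_tendsto (hγ0 : ∀ x ≥ 0, 0 ≤ γ x) (hγC1 : ContDiff ℝ 1 γ)
    (hγ' : ∀ x ≥ 0, 0 < deriv γ x) (hγsup : ¬ BddAbove (γ '' Ici 0)) (hφ0 : ∀ x, 0 ≤ φ x)
    (hφdiff : Differentiable ℝ φ) (hφ' : ∀ x, deriv φ x ≤ 0) (hφ'0 : deriv φ 0 < 0)
    (hφtop : Tendsto φ atTop (𝓝 0)) (hp0 : ∀ i, 0 ≤ p i) {y j : ι} (hpyj : p y < p j)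
    {v : ℕ → ι → ℝ} {B : ℝ} (hv : ∀ n i, v n i ≤ v n y)
    (hlim : Tendsto (fun n => restrictedRisk γ φ p univ (v n)) atTop (𝓝 B)) :
    ∃ u, restrictedRisk γ φ p univ u < B := by
  by_contra! hB
  have hyj : y ≠ j := by rintro rfl; exact lt_irrefl _ hpyj
  have hγd : Differentiable ℝ γ := hγC1.differentiable one_ne_zero
  have hγmono : MonotoneOn γ (Ici 0) := monotoneOn_of_deriv_nonneg (convex_Ici 0)
    hγd.continuous.continuousOn hγd.differentiableOn fun x hx => (hγ' x (interior_subset hx)).le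
  have hφ : Antitone φ := antitone_of_deriv_nonpos hφdiff hφ'
  have hbdd : ∀ m, 0 < p m → BddAbove (range fun n => marginSum φ univ (v n) m) := fun m hm =>
    bddAbove_marginSum_of_bddAbove_restrictedRisk hγ0 hγmono hγsup hφ0 hp0 hm hlim.bddAbove_range
  have hgap := tendsto_sub_of_tendsto_restrictedRisk hγC1 hγ' hφ hφ0 hφ'0 hpyj (fun n => hv n j)
    hB hlim (hbdd j ((hp0 y).trans_lt hpyj))
  obtain ⟨σ, hσ, F, τ, hF, hFc⟩ := exists_subseq_tendsto_or_tendsto_atBot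
    (fun n i => v n i - v n y) fun n i => sub_nonpos.2 (hv n i)
  set w : ℕ → ι → ℝ := fun n i => v (σ n) i - v (σ n) y
  have hmemF : ∀ i, Tendsto (fun n => w n i) atTop (𝓝 0) → i ∈ F ∧ τ i = 0 := fun i hi =>
    have hiF : i ∈ F := by_contra fun h => not_tendsto_nhds_of_tendsto_atBot (hFc i h) 0 hi
    ⟨hiF, tendsto_nhds_unique (hF i hiF) hi⟩
  obtain ⟨hyF, hτy⟩ := hmemF y (by simp [w])
  obtain ⟨hjF, hτj⟩ := hmemF j (by simpa [w] using (hgap.comp hσ.tendsto_atTop).neg)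
  refine not_isLocalMin_restrictedRisk hγd hγ' hφdiff hφ' hφ'0 hφ0 hyF hjF hyj
    (hτy.trans hτj.symm) hpyj (Eventually.of_forall fun t => ?_)
  simp only [zero_smul, add_zero]
  have hwlim : Tendsto (fun n => restrictedRisk γ φ p univ (w n)) atTop (𝓝 B) := by
    simpa [w, restrictedRisk_sub_const, Function.comp_def] using hlim.comp hσ.tendsto_atTop
  have hwbdd : ∀ m, 0 < p m → BddAbove (range fun n => marginSum φ univ (w n) m) := fun m hm =>
    (hbdd m hm).mono <| by
      rintro _ ⟨n, rfl⟩
      exact ⟨σ n, (marginSum_sub_const _ _ _).symm⟩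
  refine restrictedRisk_le_restrictedRisk_add_of_tendsto hγd.continuous hφdiff.continuous hφ hφ0
    hφtop hp0 hF hFc hwbdd hwlim hB fun i hi => ?_
  simp [ne_of_mem_of_not_mem hyF hi |>.symm, ne_of_mem_of_not_mem hjF hi |>.symm]

end Minimizing

theorem gammaPhi_classification_calibrated_general {k : ℕ} (γ φ : ℝ → ℝ)
    (hγ0 : ∀ x ≥ (0 : ℝ), 0 ≤ γ x)
    (hγC1 : ContDiff ℝ 1 γ) (hγ' : ∀ x ≥ (0 : ℝ), 0 < deriv γ x)
    (hγsup : ¬ BddAbove (γ '' Set.Ici 0))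
    (hφ0 : ∀ x, 0 ≤ φ x) (hφdiff : Differentiable ℝ φ)
    (hφ' : ∀ x, deriv φ x ≤ 0) (hφ'0 : deriv φ 0 < 0)
    (hφinf : ⨅ x : ℝ, φ x = 0) :
    ∀ p : Fin k → ℝ, (∀ j, 0 ≤ p j) → (∑ j, p j = 1) →
      ∀ y : Fin k, (∃ j, p y < p j) →
        (⨅ v : Fin k → ℝ, condRisk γ φ p v) <
          sInf {c | ∃ v : Fin k → ℝ, (∀ j, v j ≤ v y) ∧ c = condRisk γ φ p v} := by
  intro p hp0 _ y ⟨j, hpyj⟩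
  simp only [condRisk_eq_restrictedRisk]
  have hφtop : Tendsto φ atTop (𝓝 0) := hφinf ▸ tendsto_atTop_ciInf
    (antitone_of_deriv_nonpos hφdiff hφ') ⟨0, by rintro _ ⟨x, rfl⟩; exact hφ0 x⟩
  have hC0 : ∀ u, 0 ≤ restrictedRisk γ φ p univ u := restrictedRisk_nonneg hγ0 hφ0 hp0
  set S := {c | ∃ v : Fin k → ℝ, (∀ j, v j ≤ v y) ∧ c = restrictedRisk γ φ p univ v}
  obtain ⟨c, -, hc, hcS⟩ := exists_seq_tendsto_sInf (S := S) ⟨_, fun _ => 0, fun _ => le_rfl, rfl⟩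
    ⟨0, by rintro _ ⟨u, -, rfl⟩; exact hC0 u⟩
  choose v hv hvc using hcS
  have hlim : Tendsto (fun n => restrictedRisk γ φ p univ (v n)) atTop (𝓝 (sInf S)) := by
    simpa only [← hvc] using hc
  obtain ⟨u, hu⟩ := exists_restrictedRisk_lt_of_tendsto hγ0 hγC1 hγ' hγsup hφ0 hφdiff hφ' hφ'0
    hφtop hp0 hpyj hv hlim
  exact (ciInf_le ⟨0, by rintro _ ⟨u, rfl⟩; exact hC0 u⟩ u).trans_lt hu

/-- Main theorem: a Gamma-Phi loss with `γ` continuously differentiable, `γ' > 0` on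
`[0,∞)`, `sup γ = +∞`, and `φ` nonnegative, differentiable, non-increasing with
`φ'(0) < 0` and `inf φ = 0`, is classification-calibrated. -/
theorem gammaPhi_classification_calibrated {k : ℕ} (hk : 2 ≤ k) (γ φ : ℝ → ℝ)
    (hγ0 : ∀ x ≥ (0 : ℝ), 0 ≤ γ x)
    (hγC1 : ContDiff ℝ 1 γ) (hγ' : ∀ x ≥ (0 : ℝ), 0 < deriv γ x)
    (hγsup : ¬ BddAbove (γ '' Set.Ici 0))
    (hφ0 : ∀ x, 0 ≤ φ x) (hφdiff : Differentiable ℝ φ)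
    (hφ' : ∀ x, deriv φ x ≤ 0) (hφ'0 : deriv φ 0 < 0)
    (hφinf : ⨅ x : ℝ, φ x = 0) :
    ∀ p : Fin k → ℝ, (∀ j, 0 ≤ p j) → (∑ j, p j = 1) →
      ∀ y : Fin k, (∃ j, p y < p j) →
        (⨅ v : Fin k → ℝ, condRisk γ φ p v) <
          sInf {c | ∃ v : Fin k → ℝ, (∀ j, v j ≤ v y) ∧ c = condRisk γ φ p v} :=
  gammaPhi_classification_calibrated_general γ φ hγ0 hγC1 hγ' hγsup hφ0 hφdiff hφ' hφ'0 hφinf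
end

section
/- Define φ(x) = exp(−x) and γ(x) = 1 − (x−1)^2 for x < 1, γ(x) = 2(x−1)^2 + 1 for x ≥ 1. Then γ : R_{≥0} → R_{≥0} is strictly increasing with sup γ = +∞, and φ is nonnegative, differentiable, non-increasing with φ'(0) < 0 and inf φ = 0, but the associated Gamma-Phi loss L_y(v) = γ(Σ_{j≠y} φ(v_y − v_j)) on R^k (k ≥ 2) is NOT classification-calibrated. -/
noncomputable def γc (x : ℝ) : ℝ := if x < 1 then 1 - (x - 1) ^ 2 else 2 * (x - 1) ^ 2 + 1

noncomputable def φc (x : ℝ) : ℝ := Real.exp (-x)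

/-!
Take `p = (9/20, 11/20, 0, …, 0)` and the less likely class `0`. With `t = φ(v₀ - v₁)`, the losses
of classes `0` and `1` are at least `γ t` and `γ t⁻¹`. Above `1`, `γ` rises twice as fast as it falls
below `1`, so `9/20 · γ t + 11/20 · γ t⁻¹ ≥ γ 1 = 1`: every score vector has risk at least `1`.
Yet the risk tends to `1` along `v₀ = v₁ = 0`, `vⱼ → -∞` for `j ≥ 2`, where class `0` ties for the
maximal score, so restricting to such vectors does not increase the infimum.
-/

open Filter Topology Finset

lemma continuous_γc : Continuous γc := by
  have h : γc = fun x => if 1 ≤ x then 2 * (x - 1) ^ 2 + 1 else 1 - (x - 1) ^ 2 := by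
    ext x
    simp only [γc, ← not_le]
    split_ifs <;> rfl
  rw [h]
  exact Continuous.if_le (by fun_prop) (by fun_prop) continuous_const continuous_id
    fun x hx => by simp [← hx]

lemma strictMonoOn_γc : StrictMonoOn γc (Set.Ici 0) := by
  intro a ha b hb hab
  simp only [Set.mem_Ici] at ha hb
  unfold γc
  split_ifs <;> nlinarith

lemma γc_nonneg {x : ℝ} (hx : 0 ≤ x) : 0 ≤ γc x := by
  unfold γc
  split_ifs <;> nlinarith

lemma not_bddAbove_γc : ¬ BddAbove (γc '' Set.Ici 0) := by
  rw [not_bddAbove_iff]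
  intro B
  refine ⟨γc (|B| + 2), ⟨_, by simp only [Set.mem_Ici]; positivity, rfl⟩, ?_⟩
  rw [γc, if_neg (by linarith [abs_nonneg B])]
  nlinarith [le_abs_self B, abs_nonneg B]

lemma γc_of_le_one {x : ℝ} (hx : x ≤ 1) : γc x = 1 - (x - 1) ^ 2 := by
  rcases hx.lt_or_eq with hx | rfl
  · rw [γc, if_pos hx]
  · norm_num [γc]

lemma γc_of_one_le {x : ℝ} (hx : 1 ≤ x) : γc x = 2 * (x - 1) ^ 2 + 1 := by
  rw [γc, if_neg hx.not_gt]

lemma one_le_mul_γc_add_mul_γc_inv {a b t : ℝ} (ha : a ≤ 2 * b) (hb : b ≤ 2 * a)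
    (hab : a + b = 1) (ht : 0 < t) : 1 ≤ a * γc t + b * γc t⁻¹ := by
  have hinv : (t⁻¹ - 1) ^ 2 = (1 - t) ^ 2 / t ^ 2 := by field_simp
  rcases le_total t 1 with h | h
  · have h3 : (1 - t) ^ 2 ≤ (1 - t) ^ 2 / t ^ 2 := by
      rw [le_div_iff₀ (by positivity)]
      nlinarith [mul_nonneg (sq_nonneg (1 - t)) (by nlinarith : (0 : ℝ) ≤ 1 - t ^ 2)]
    rw [γc_of_le_one h, γc_of_one_le (one_le_inv₀ ht |>.mpr h), hinv]
    nlinarith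
  · have h3 : (1 - t) ^ 2 / t ^ 2 ≤ (1 - t) ^ 2 := by
      rw [div_le_iff₀ (by positivity)]
      nlinarith [sq_nonneg (1 - t)]
    rw [γc_of_one_le h, γc_of_le_one (inv_le_one_of_one_le₀ h), hinv]
    nlinarith

lemma hasDerivAt_φc (x : ℝ) : HasDerivAt φc (-φc x) x := by
  show HasDerivAt (fun x => Real.exp (-x)) (-Real.exp (-x)) x
  simpa using (hasDerivAt_neg x).exp

lemma φc_pos (x : ℝ) : 0 < φc x := Real.exp_pos _

lemma antitone_φc : Antitone φc := fun _ _ h => Real.exp_le_exp.mpr (neg_le_neg h)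

lemma φc_sub_comm (a b : ℝ) : φc (a - b) = (φc (b - a))⁻¹ := by
  rw [φc, φc, ← Real.exp_neg]
  ring_nf

lemma tendsto_φc_atTop : Tendsto φc atTop (𝓝 0) := Real.tendsto_exp_neg_atTop_nhds_zero

lemma iInf_φc : ⨅ x, φc x = 0 :=
  tendsto_nhds_unique
    (tendsto_atTop_ciInf antitone_φc ⟨0, Set.forall_mem_range.mpr fun x => (φc_pos x).le⟩)
    tendsto_φc_atTop

section GammaPhiLoss

variable {k : ℕ} {γ φ : ℝ → ℝ}

lemma condRisk_single_add_single (i j : Fin k) (a b : ℝ) (v : Fin k → ℝ) :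
    condRisk γ φ (Pi.single i a + Pi.single j b) v =
      a * gammaPhiLoss γ φ v i + b * gammaPhiLoss γ φ v j := by
  simp [condRisk, add_mul, sum_add_distrib, Pi.single_apply]

lemma apply_le_gammaPhiLoss (hγ : MonotoneOn γ (Set.Ici 0)) (hφ : ∀ x, 0 ≤ φ x)
    {i j : Fin k} (hij : i ≠ j) (v : Fin k → ℝ) :
    γ (φ (v i - v j)) ≤ gammaPhiLoss γ φ v i :=
  hγ (hφ _) (sum_nonneg fun l _ => hφ _)
    (single_le_sum (f := fun l => φ (v i - v l)) (fun l _ => hφ _) (by simp [hij.symm]))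

lemma tendsto_gammaPhiLoss_cutoff (hφ : Tendsto φ atTop (𝓝 0)) {s : Finset (Fin k)} {y : Fin k}
    (hy : y ∈ s) (hγ : ContinuousAt γ (#(s.erase y) * φ 0)) :
    Tendsto (fun M => gammaPhiLoss γ φ (fun j => if j ∈ s then 0 else -M) y) atTop
      (𝓝 (γ (#(s.erase y) * φ 0))) := by
  refine hγ.tendsto.comp ?_
  have hterm (j : Fin k) :
      Tendsto (fun M => φ ((if y ∈ s then 0 else -M) - if j ∈ s then 0 else -M)) atTop
        (𝓝 (if j ∈ s then φ 0 else 0)) := by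
    by_cases hj : j ∈ s
    · simp [hy, hj]
    · simpa [hy, hj] using hφ
  convert tendsto_finsetSum _ fun j _ => hterm j using 2
  simp [sum_ite_mem, inter_comm, inter_erase]

end GammaPhiLoss

lemma one_le_condRisk_γc_φc {k : ℕ} {a b : ℝ} (ha : a ≤ 2 * b) (hb : b ≤ 2 * a) (hab : a + b = 1)
    {i j : Fin k} (hij : i ≠ j) (v : Fin k → ℝ) :
    1 ≤ condRisk γc φc (Pi.single i a + Pi.single j b) v := by
  have hmono := strictMonoOn_γc.monotoneOn
  have hφ (x : ℝ) : 0 ≤ φc x := (φc_pos x).le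
  calc 1 ≤ a * γc (φc (v i - v j)) + b * γc (φc (v i - v j))⁻¹ :=
        one_le_mul_γc_add_mul_γc_inv ha hb hab (φc_pos _)
    _ ≤ a * gammaPhiLoss γc φc v i + b * gammaPhiLoss γc φc v j := by
        rw [← φc_sub_comm]
        exact add_le_add
          (mul_le_mul_of_nonneg_left (apply_le_gammaPhiLoss hmono hφ hij v) (by linarith))
          (mul_le_mul_of_nonneg_left (apply_le_gammaPhiLoss hmono hφ hij.symm v) (by linarith))
    _ = condRisk γc φc (Pi.single i a + Pi.single j b) v :=
        (condRisk_single_add_single i j a b v).symm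

lemma tendsto_condRisk_γc_φc_cutoff {k : ℕ} {a b : ℝ} (hab : a + b = 1)
    {i j : Fin k} (hij : i ≠ j) :
    Tendsto (fun M => condRisk γc φc (Pi.single i a + Pi.single j b)
      (fun l => if l ∈ ({i, j} : Finset (Fin k)) then 0 else -M)) atTop (𝓝 1) := by
  have hlim (y : Fin k) (hy : y ∈ ({i, j} : Finset (Fin k))) := tendsto_gammaPhiLoss_cutoff
    tendsto_φc_atTop hy continuous_γc.continuousAt
  have hi := hlim i (by simp)
  have hj := hlim j (by simp)
  simp only [condRisk_single_add_single]
  convert (hi.const_mul a).add (hj.const_mul b)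
  simp [hij, hij.symm, φc, γc, hab]

lemma not_classificationCalibrated_γc_φc {k : ℕ} (hk : 2 ≤ k) :
    ¬ (∀ p : Fin k → ℝ, (∀ j, 0 ≤ p j) → (∑ j, p j = 1) →
        ∀ y : Fin k, (∃ j, p y < p j) →
          (⨅ v : Fin k → ℝ, condRisk γc φc p v) <
            sInf {c | ∃ v : Fin k → ℝ, (∀ j, v j ≤ v y) ∧ c = condRisk γc φc p v}) := by
  intro H
  let i : Fin k := ⟨0, by omega⟩
  let j : Fin k := ⟨1, by omega⟩
  have hij : i ≠ j := by simp [i, j, Fin.ext_iff]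
  set p : Fin k → ℝ := Pi.single i (9 / 20) + Pi.single j (11 / 20)
  have hlow : ∀ v, 1 ≤ condRisk γc φc p v :=
    one_le_condRisk_γc_φc (by norm_num) (by norm_num) (by norm_num) hij
  have hup : sInf {c | ∃ v : Fin k → ℝ, (∀ l, v l ≤ v i) ∧ c = condRisk γc φc p v} ≤ 1 := by
    refine ge_of_tendsto (tendsto_condRisk_γc_φc_cutoff (by norm_num) hij)
      ((eventually_ge_atTop 0).mono fun M hM => csInf_le ⟨1, ?_⟩ ⟨_, fun l => ?_, rfl⟩)
    · rintro _ ⟨v, -, rfl⟩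
      exact hlow v
    · simp only [mem_insert_self, if_true]
      split_ifs <;> linarith
  have hp_nonneg (l : Fin k) : 0 ≤ p l := by
    simp only [p, Pi.add_apply, Pi.single_apply]
    split_ifs <;> norm_num
  have hp_sum : ∑ l, p l = 1 := by
    norm_num [p, sum_add_distrib]
  have hgap := H p hp_nonneg hp_sum i ⟨j, by norm_num [p, hij, hij.symm]⟩
  linarith [le_ciInf hlow]

/-- `γc` is strictly increasing on `[0,∞)` with values in `[0,∞)` and `sup γc = +∞`, and
`φc` is nonnegative, differentiable, non-increasing with `φc'(0) < 0` and `inf φc = 0`,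
yet the associated Gamma-Phi loss is NOT classification-calibrated. -/
theorem gammaPhi_counterexample {k : ℕ} (hk : 2 ≤ k) :
    StrictMonoOn γc (Set.Ici 0) ∧ (∀ x ≥ (0 : ℝ), 0 ≤ γc x) ∧
    ¬ BddAbove (γc '' Set.Ici 0) ∧
    (∀ x, 0 ≤ φc x) ∧ Differentiable ℝ φc ∧ Antitone φc ∧
    deriv φc 0 < 0 ∧ (⨅ x : ℝ, φc x = 0) ∧
    ¬ (∀ p : Fin k → ℝ, (∀ j, 0 ≤ p j) → (∑ j, p j = 1) →
        ∀ y : Fin k, (∃ j, p y < p j) →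
          (⨅ v : Fin k → ℝ, condRisk γc φc p v) <
            sInf {c | ∃ v : Fin k → ℝ, (∀ j, v j ≤ v y) ∧ c = condRisk γc φc p v}) :=
  ⟨strictMonoOn_γc, fun _ hx => γc_nonneg hx, not_bddAbove_γc, fun x => (φc_pos x).le,
    fun x => (hasDerivAt_φc x).differentiableAt, antitone_φc,
    (hasDerivAt_φc 0).deriv ▸ neg_lt_zero.mpr (φc_pos 0), iInf_φc,
    not_classificationCalibrated_γc_φc hk⟩
end

section
/- Let L : R^k → R^k_{≥0} be a permutation equivariant multiclass loss that is NOT classification-calibrated, and let X be a nonempty measurable space. Then L does not have the consistency transfer property: there exists a probability distribution P on X × [k] and a sequence of Borel functions f̂_n : X → R^k such that R_{L,P}(f̂_n) → inf_f R_{L,P}(f) but R_{01,P}(argmax ∘ f̂_n) does not converge to inf_h R_{01,P}(h), where the infimums are over Borel f : X → R^k and h : X → [k]. -/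
/-!
Failure of calibration provides a label distribution `p` and a label `y` that is not a mode of
`p`, together with score vectors `v n` maximised at `y` whose conditional risks tend to the
optimal conditional risk. Put all the mass of `P` on a single point `x₀` with label
distribution `p`. Every measurable score function then has risk equal to the conditional
risk of its value at `x₀`, so the constant functions `v n` are `L`-consistent; but their
argmax classifier always predicts `y`, whose 01-risk `1 - p y` exceeds that of predicting a
label `j` with `p y < p j`.
-/

open Filter Topology MeasureTheory

lemma exists_seq_mem_tendsto_iInf_of_sInf_image_le {α : Type*} {φ : α → ℝ}
    (hφ : BddBelow (Set.range φ)) {S : Set α} (hS : S.Nonempty)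
    (hle : sInf (φ '' S) ≤ ⨅ a, φ a) :
    ∃ v : ℕ → α, (∀ n, v n ∈ S) ∧ Tendsto (fun n => φ (v n)) atTop (𝓝 (⨅ a, φ a)) := by
  have hbdd : BddBelow (φ '' S) := hφ.mono (Set.image_subset_range φ S)
  have heq : sInf (φ '' S) = ⨅ a, φ a :=
    le_antisymm hle (le_csInf (hS.image φ) (by
      rintro _ ⟨a, -, rfl⟩
      exact ciInf_le hφ a))
  obtain ⟨u, -, hu, huS⟩ := exists_seq_tendsto_sInf (hS.image φ) hbdd
  choose v hvS hv using huS
  exact ⟨v, hvS, by simpa only [hv, heq] using hu⟩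

lemma exists_seq_tendsto_iInf_condRiskL_of_not_classificationCalibrated {k : ℕ}
    {L : (Fin k → ℝ) → Fin k → ℝ} (hL0 : ∀ v y, 0 ≤ L v y) (hnc : ¬ ClassificationCalibrated L) :
    ∃ p : Fin k → ℝ, (∀ j, 0 ≤ p j) ∧ ∑ j, p j = 1 ∧ ∃ y j, p y < p j ∧
      ∃ v : ℕ → Fin k → ℝ, (∀ n i, v n i ≤ v n y) ∧
        Tendsto (fun n => condRiskL L p (v n)) atTop (𝓝 (⨅ w, condRiskL L p w)) := by
  simp only [ClassificationCalibrated, not_forall, not_lt] at hnc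
  obtain ⟨p, hp0, hp1, y, ⟨j, hyj⟩, hle⟩ := hnc
  have hbdd : BddBelow (Set.range (condRiskL L p)) :=
    ⟨0, by
      rintro _ ⟨v, rfl⟩
      exact Finset.sum_nonneg fun j _ => mul_nonneg (hp0 j) (hL0 v j)⟩
  have himage : condRiskL L p '' {v | ∀ j, v j ≤ v y} =
      {c | ∃ v : Fin k → ℝ, (∀ j, v j ≤ v y) ∧ c = condRiskL L p v} :=
    Set.ext fun _ => exists_congr fun _ => and_congr_right' eq_comm
  obtain ⟨v, hvy, hv⟩ := exists_seq_mem_tendsto_iInf_of_sInf_image_le hbdd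
    (S := {v | ∀ j, v j ≤ v y}) ⟨0, fun _ => le_rfl⟩ (himage ▸ hle)
  exact ⟨p, hp0, hp1, y, j, hyj, v, hvy, hv⟩

section PointMass

variable {X Y : Type*} [MeasurableSpace X] [MeasurableSpace Y]

lemma ae_map_prodMk_comp_fst_eq {β : Type*} [MeasurableSpace β] [MeasurableSingletonClass β]
    (x₀ : X) (ν : Measure Y) {g : X → β} (hg : Measurable g) :
    ∀ᵐ z ∂ν.map (Prod.mk x₀), g z.1 = g x₀ :=
  (ae_map_iff measurable_prodMk_left.aemeasurable
    ((hg.comp measurable_fst) (measurableSet_singleton (g x₀)))).2 (ae_of_all _ fun _ => rfl)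

/-- `F` need not be measurable: `g z.1 = g x₀` holds a.e. because `{x | g x = g x₀}` is
measurable, so the integrand agrees a.e. with a function of the label alone. -/
lemma integral_map_prodMk_comp_fst [DiscreteMeasurableSpace Y] {β : Type*} [MeasurableSpace β]
    [MeasurableSingletonClass β] (x₀ : X) (ν : Measure Y) {g : X → β} (hg : Measurable g)
    (F : β → Y → ℝ) :
    ∫ z, F (g z.1) z.2 ∂ν.map (Prod.mk x₀) = ∫ y, F (g x₀) y ∂ν := by
  rw [integral_congr_ae (g := fun z => F (g x₀) z.2)
    (by filter_upwards [ae_map_prodMk_comp_fst_eq x₀ ν hg] with z hz; rw [hz])]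
  exact integral_map measurable_prodMk_left.aemeasurable
    (Measurable.of_discrete.comp measurable_snd).aestronglyMeasurable

lemma map_prodMk_apply_comp_fst_ne [MeasurableEq Y] (x₀ : X) (ν : Measure Y) {g : X → Y}
    (hg : Measurable g) :
    ν.map (Prod.mk x₀) {z | g z.1 ≠ z.2} = ν {y | g x₀ ≠ y} :=
  Measure.map_apply measurable_prodMk_left
    (measurableSet_eq_fun (hg.comp measurable_fst) measurable_snd).compl

end PointMass

section Simplex

variable {ι : Type*} [Fintype ι] {p : ι → ℝ} (hp0 : ∀ i, 0 ≤ p i) (hp1 : ∑ i, p i = 1)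

noncomputable def PMF.ofSimplex : PMF ι :=
  PMF.ofFintype (fun i => ENNReal.ofReal (p i)) (by
    rw [← ENNReal.ofReal_sum_of_nonneg fun i _ => hp0 i, hp1, ENNReal.ofReal_one])

lemma PMF.ofSimplex_apply_toReal (i : ι) : (PMF.ofSimplex hp0 hp1 i).toReal = p i :=
  ENNReal.toReal_ofReal (hp0 i)

variable [MeasurableSpace ι] [MeasurableSingletonClass ι]

lemma PMF.integral_ofSimplex (f : ι → ℝ) :
    ∫ i, f i ∂(PMF.ofSimplex hp0 hp1).toMeasure = ∑ i, p i * f i := by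
  simp only [PMF.integral_eq_sum, PMF.ofSimplex_apply_toReal, smul_eq_mul]

lemma PMF.ofSimplex_real_ne (a : ι) :
    (PMF.ofSimplex hp0 hp1).toMeasure.real {i | a ≠ i} = 1 - p a := by
  have hcompl : {i | a ≠ i} = ({a} : Set ι)ᶜ := Set.ext fun _ => ne_comm
  rw [hcompl, probReal_compl_eq_one_sub (measurableSet_singleton a), measureReal_def,
    PMF.toMeasure_apply_singleton _ _ (measurableSet_singleton a), PMF.ofSimplex_apply_toReal]

end Simplex

section PointMassCounterexample

variable {k : ℕ} {X : Type*} [MeasurableSpace X] {p : Fin k → ℝ} (hp0 : ∀ j, 0 ≤ p j)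
  (hp1 : ∑ j, p j = 1) (x₀ : X)

noncomputable def pointMassMeasure : Measure (X × Fin k) :=
  (PMF.ofSimplex hp0 hp1).toMeasure.map (Prod.mk x₀)

instance : IsProbabilityMeasure (pointMassMeasure hp0 hp1 x₀) :=
  Measure.isProbabilityMeasure_map measurable_prodMk_left.aemeasurable

lemma pointMassMeasure_risk (L : (Fin k → ℝ) → Fin k → ℝ) {g : X → Fin k → ℝ}
    (hg : Measurable g) :
    ∫ z, L (g z.1) z.2 ∂pointMassMeasure hp0 hp1 x₀ = condRiskL L p (g x₀) := by
  rw [pointMassMeasure, integral_map_prodMk_comp_fst x₀ _ hg, PMF.integral_ofSimplex]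
  rfl

lemma sInf_pointMassMeasure_risk (L : (Fin k → ℝ) → Fin k → ℝ) :
    sInf {c | ∃ g : X → Fin k → ℝ, Measurable g ∧
        c = ∫ z, L (g z.1) z.2 ∂pointMassMeasure hp0 hp1 x₀} = ⨅ v, condRiskL L p v := by
  rw [← sInf_range]
  congr 1
  ext c
  constructor
  · rintro ⟨g, hg, rfl⟩
    exact ⟨g x₀, (pointMassMeasure_risk hp0 hp1 x₀ L hg).symm⟩
  · rintro ⟨v, rfl⟩
    exact ⟨fun _ => v, measurable_const, (pointMassMeasure_risk hp0 hp1 x₀ L measurable_const).symm⟩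

lemma pointMassMeasure_zeroOneRisk {g : X → Fin k} (hg : Measurable g) :
    (pointMassMeasure hp0 hp1 x₀ {z | g z.1 ≠ z.2}).toReal = 1 - p (g x₀) := by
  rw [pointMassMeasure, map_prodMk_apply_comp_fst_ne x₀ _ hg, ← measureReal_def,
    PMF.ofSimplex_real_ne]

lemma sInf_pointMassMeasure_zeroOneRisk_le (j : Fin k) :
    sInf {c | ∃ g : X → Fin k, Measurable g ∧
        c = (pointMassMeasure hp0 hp1 x₀ {z | g z.1 ≠ z.2}).toReal} ≤ 1 - p j :=
  csInf_le ⟨0, by rintro _ ⟨g, -, rfl⟩; exact ENNReal.toReal_nonneg⟩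
    ⟨fun _ => j, measurable_const, (pointMassMeasure_zeroOneRisk hp0 hp1 x₀ measurable_const).symm⟩

end PointMassCounterexample

theorem not_calibrated_imp_no_consistency_transfer_general {k : ℕ}
    (L : (Fin k → ℝ) → Fin k → ℝ)
    (hL0 : ∀ v y, 0 ≤ L v y)
    (hnc : ¬ ClassificationCalibrated L)
    (X : Type*) [MeasurableSpace X] [Nonempty X] :
    ∃ P : Measure (X × Fin k), IsProbabilityMeasure P ∧
      ∃ f : ℕ → X → Fin k → ℝ, (∀ n, Measurable (f n)) ∧
        ∃ h : ℕ → X → Fin k, (∀ n, Measurable (h n)) ∧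
          (∀ n x j, f n x j ≤ f n x (h n x)) ∧
          Tendsto (fun n => ∫ z, L (f n z.1) z.2 ∂P) atTop
            (𝓝 (sInf {c | ∃ g : X → Fin k → ℝ, Measurable g ∧
                  c = ∫ z, L (g z.1) z.2 ∂P})) ∧
          ¬ Tendsto (fun n => (P {z | h n z.1 ≠ z.2}).toReal) atTop
            (𝓝 (sInf {c | ∃ g : X → Fin k, Measurable g ∧
                  c = (P {z | g z.1 ≠ z.2}).toReal})) := by
  obtain ⟨p, hp0, hp1, y, j, hyj, v, hvy, hv⟩ :=
    exists_seq_tendsto_iInf_condRiskL_of_not_classificationCalibrated hL0 hnc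
  obtain ⟨x₀⟩ := ‹Nonempty X›
  refine ⟨pointMassMeasure hp0 hp1 x₀, inferInstance, fun n _ => v n, fun _ => measurable_const,
    fun _ _ => y, fun _ => measurable_const, fun n _ => hvy n, ?_, ?_⟩
  · simpa only [pointMassMeasure_risk hp0 hp1 x₀ L measurable_const,
      sInf_pointMassMeasure_risk] using hv
  · simp only [pointMassMeasure_zeroOneRisk hp0 hp1 x₀ measurable_const]
    intro hlim
    have hlow := sInf_pointMassMeasure_zeroOneRisk_le hp0 hp1 x₀ j
    linarith [tendsto_nhds_unique tendsto_const_nhds hlim]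

/-- If a permutation equivariant loss is not classification-calibrated, it fails the
consistency transfer property: there are a probability distribution `P` on `X × [k]` and
a sequence of measurable score functions whose `L`-risks converge to the Bayes `L`-risk,
while the 01-risks of the induced (argmax) classifiers do not converge to the Bayes
01-risk. -/
theorem not_calibrated_imp_no_consistency_transfer {k : ℕ} (hk : 2 ≤ k)
    (L : (Fin k → ℝ) → Fin k → ℝ)
    (hL0 : ∀ v y, 0 ≤ L v y)
    (hequiv : ∀ (σ : Equiv.Perm (Fin k)) (v : Fin k → ℝ),
      L (fun j => v (σ j)) = fun j => L v (σ j))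
    (hnc : ¬ ClassificationCalibrated L)
    (X : Type*) [MeasurableSpace X] [Nonempty X] :
    ∃ P : Measure (X × Fin k), IsProbabilityMeasure P ∧
      ∃ f : ℕ → X → Fin k → ℝ, (∀ n, Measurable (f n)) ∧
        ∃ h : ℕ → X → Fin k, (∀ n, Measurable (h n)) ∧
          (∀ n x j, f n x j ≤ f n x (h n x)) ∧
          Tendsto (fun n => ∫ z, L (f n z.1) z.2 ∂P) atTop
            (𝓝 (sInf {c | ∃ g : X → Fin k → ℝ, Measurable g ∧
                  c = ∫ z, L (g z.1) z.2 ∂P})) ∧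
          ¬ Tendsto (fun n => (P {z | h n z.1 ≠ z.2}).toReal) atTop
            (𝓝 (sInf {c | ∃ g : X → Fin k, Measurable g ∧
                  c = (P {z | g z.1 ≠ z.2}).toReal})) :=
  not_calibrated_imp_no_consistency_transfer_general L hL0 hnc X
end
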